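/- arXiv:cond-mat/0303200 — 5 statements merged into one kernel-verified Lean document; each statement's English description precedes it below -/
import Mathlib

section
/- Let φ ∈ ℝ^N be a configuration with sin φ_i = 0 for all i (so each cos φ_i = ±1), and let n_π = #{ i : cos φ_i = −1 }. Then the potential energy per particle takes the value V(φ)/N = (1/2)[1 − (N − 2 n_π)²/N²] − (h/N)(N − 2 n_π). -/
open Real

/-- The mean-field XY potential with `N` rotators and external field `h`. -/
noncomputable def mfV (N : ℕ) (h : ℝ) (φ : Fin N → ℝ) : ℝ :=
  (1 / (2 * N)) * ∑ i, ∑ j, (1 - Real.cos (φ i - φ j)) - h * ∑ i, Real.cos (φ i)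

theorem mfV_critical_values (N : ℕ) (hN : 1 ≤ N) (h : ℝ) (φ : Fin N → ℝ)
    (hs : ∀ i, Real.sin (φ i) = 0) :
    mfV N h φ / N =
      (1 / 2) * (1 - ((N : ℝ) - 2 * ((Finset.univ.filter
          (fun i => Real.cos (φ i) = -1)).card : ℝ)) ^ 2 / (N : ℝ) ^ 2) -
        (h / N) * ((N : ℝ) - 2 * ((Finset.univ.filter
          (fun i => Real.cos (φ i) = -1)).card : ℝ)) := by
  have hNpos : (0:ℝ) < N := by exact_mod_cast hN
  have hNne : (N:ℝ) ≠ 0 := ne_of_gt hNpos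
  set S : ℝ := ∑ i, Real.cos (φ i) with hS
  set n : ℕ := (Finset.univ.filter (fun i => Real.cos (φ i) = -1)).card with hn
  have hc : ∀ i, Real.cos (φ i) = 1 ∨ Real.cos (φ i) = -1 := by
    intro i
    have h1 : Real.sin (φ i) ^ 2 + Real.cos (φ i) ^ 2 = 1 := Real.sin_sq_add_cos_sq _
    rw [hs i] at h1
    have h2 : Real.cos (φ i) ^ 2 = 1 := by linarith
    have h3 : (Real.cos (φ i) - 1) * (Real.cos (φ i) + 1) = 0 := by ring_nf; linarith
    rcases mul_eq_zero.mp h3 with h' | h'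
    · exact Or.inl (by linarith)
    · exact Or.inr (by linarith)
  have hnle : n ≤ N := by
    rw [hn]
    calc (Finset.univ.filter (fun i => Real.cos (φ i) = -1)).card
        ≤ (Finset.univ : Finset (Fin N)).card := Finset.card_filter_le _ _
      _ = N := by simp
  have hSval : S = (N:ℝ) - 2 * n := by
    have hrw : ∀ i, Real.cos (φ i) =
        (if Real.cos (φ i) = -1 then (-1:ℝ) else 1) := by
      intro i
      by_cases hi : Real.cos (φ i) = -1
      · rw [if_pos hi, hi]
      · rw [if_neg hi]
        rcases hc i with h' | h'
        · exact h'
        · exact absurd h' hi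
    rw [hS, Finset.sum_congr rfl (fun i _ => hrw i), Finset.sum_ite,
      Finset.sum_const, Finset.sum_const, nsmul_eq_mul, nsmul_eq_mul,
      Finset.filter_not, Finset.card_sdiff_of_subset (Finset.filter_subset _ _)]
    rw [Finset.card_univ, Fintype.card_fin, ← hn, Nat.cast_sub hnle]
    ring
  have hdouble : ∑ i, ∑ j, (1 - Real.cos (φ i - φ j)) = (N:ℝ)^2 - S^2 := by
    have hcs : ∀ i j, Real.cos (φ i - φ j) = Real.cos (φ i) * Real.cos (φ j) := by
      intro i j
      rw [Real.cos_sub, hs i, hs j]; ring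
    simp_rw [hcs, Finset.sum_sub_distrib, Finset.sum_const, ← Finset.mul_sum,
      ← Finset.sum_mul, Finset.card_univ, Fintype.card_fin]
    rw [← hS]; ring
  have key : mfV N h φ = (1 / (2 * N)) * ((N:ℝ)^2 - S^2) - h * S := by
    unfold mfV
    rw [hdouble, ← hS]
  rw [key, hSval]
  field_simp
end

section
/- Let φ ∈ ℝ^N be a configuration with sin φ_i = 0 for all i (so each cos φ_i = ±1); let n_d = #{ i ∈ {1,…,N−1} : cos φ_i ≠ cos φ_{i+1} } be the number of domain walls and n_π = #{ i : cos φ_i = −1 }. Then the one-dimensional XY potential with free boundary conditions takes the value V₁(φ) = n_d/2 − h(N − 2 n_π). -/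
open Real

/-- The one-dimensional XY potential with nearest-neighbor interactions, free
boundary conditions and external field `h`, for `N = n + 2` rotators. -/
noncomputable def XY1dV (n : ℕ) (h : ℝ) (φ : Fin (n + 2) → ℝ) : ℝ :=
  (1 / 4) * ∑ i : Fin (n + 1), (1 - Real.cos (φ i.succ - φ i.castSucc)) -
    h * ∑ i, Real.cos (φ i)

/-- Value of the one-dimensional XY potential at a critical configuration:
`V₁(φ) = n_d/2 − h (N − 2 n_π)`, where `n_d` is the number of domain walls and
`n_π` the number of angles equal to `π` (mod `2π`). -/
theorem XY1d_critical_values (n : ℕ) (h : ℝ) (φ : Fin (n + 2) → ℝ)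
    (hs : ∀ i, Real.sin (φ i) = 0) :
    XY1dV n h φ =
      ((Finset.univ.filter
          (fun i : Fin (n + 1) => Real.cos (φ i.castSucc) ≠ Real.cos (φ i.succ))).card : ℝ) / 2 -
        h * (((n : ℝ) + 2) - 2 * ((Finset.univ.filter
          (fun i : Fin (n + 2) => Real.cos (φ i) = -1)).card : ℝ)) := by
  have hc : ∀ i, Real.cos (φ i) = 1 ∨ Real.cos (φ i) = -1 := by
    intro i
    have h1 := Real.sin_sq_add_cos_sq (φ i)
    rw [hs i] at h1
    have h2 : (Real.cos (φ i) - 1) * (Real.cos (φ i) + 1) = 0 := by nlinarith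
    rcases mul_eq_zero.mp h2 with h3 | h3
    · left; linarith
    · right; linarith
  have hterm : ∀ i : Fin (n + 1),
      1 - Real.cos (φ i.succ - φ i.castSucc) =
        if Real.cos (φ i.castSucc) ≠ Real.cos (φ i.succ) then (2 : ℝ) else 0 := by
    intro i
    rcases hc i.castSucc with h1 | h1 <;> rcases hc i.succ with h2 | h2 <;>
      simp [Real.cos_sub, hs, h1, h2] <;> norm_num
  have hcos : ∀ i : Fin (n + 2),
      Real.cos (φ i) = 1 - 2 * (if Real.cos (φ i) = -1 then (1 : ℝ) else 0) := by
    intro i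
    rcases hc i with h1 | h1 <;> simp [h1] <;> norm_num
  have hsum1 : ∑ i : Fin (n + 1), (1 - Real.cos (φ i.succ - φ i.castSucc)) =
      2 * ((Finset.univ.filter
        (fun i : Fin (n + 1) => Real.cos (φ i.castSucc) ≠ Real.cos (φ i.succ))).card : ℝ) := by
    rw [Finset.sum_congr rfl fun i _ => hterm i, Finset.sum_ite, Finset.sum_const,
      Finset.sum_const]
    simp [mul_comm]
  have hsum2 : ∑ i, Real.cos (φ i) =
      ((n : ℝ) + 2) - 2 * ((Finset.univ.filter
        (fun i : Fin (n + 2) => Real.cos (φ i) = -1)).card : ℝ) := by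
    rw [Finset.sum_congr rfl fun i _ => hcos i, Finset.sum_sub_distrib,
      Finset.sum_const, ← Finset.mul_sum, Finset.sum_ite, Finset.sum_const,
      Finset.sum_const]
    simp
  rw [XY1dV, hsum1, hsum2]
  ring
end

section
/- Let N ≥ 2 and σ ∈ {−1,+1}^N, and let H be the N×N real symmetric tridiagonal matrix H = Σ_{i=1}^{N−1} σ_i σ_{i+1} (e_i − e_{i+1})(e_i − e_{i+1})^T, where e_1,…,e_N is the standard basis (equivalently: H has diagonal entries α_1 = σ_1σ_2, α_i = σ_{i−1}σ_i + σ_iσ_{i+1} for 2 ≤ i ≤ N−1, α_N = σ_{N−1}σ_N, and off-diagonal entries H_{i,i+1} = H_{i+1,i} = −σ_iσ_{i+1}). Let n_d = #{ i ∈ {1,…,N−1} : σ_i ≠ σ_{i+1} }. Then H(1,1,…,1)^T = 0, and H has exactly n_d negative eigenvalues and exactly N − 1 − n_d positive eigenvalues, counted with multiplicity. -/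
open Matrix Polynomial Finset

private lemma charmatrix_diag {N : Type*} [Fintype N] [DecidableEq N] (d : N → ℝ) :
    charmatrix (Matrix.diagonal d) = Matrix.diagonal (fun i => X - C (d i)) := by
  ext i j
  by_cases h : i = j
  · subst h; simp
  · simp [h, Matrix.diagonal_apply_ne _ h]

private lemma charpoly_diag {N : Type*} [Fintype N] [DecidableEq N] (d : N → ℝ) :
    (Matrix.diagonal d).charpoly = ∏ i, (X - C (d i)) := by
  rw [Matrix.charpoly, charmatrix_diag, Matrix.det_diagonal]

private lemma charpoly_conj {N : Type*} [Fintype N] [DecidableEq N]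
    (U B V : Matrix N N ℝ) (hUV : U * V = 1) (hVU : V * U = 1) :
    (U * B * V).charpoly = B.charpoly := by
  have hmap : ∀ M : Matrix N N ℝ, (C : ℝ →+* ℝ[X]).mapMatrix M = M.map C := fun _ => rfl
  have key : charmatrix (U * B * V)
      = ((C : ℝ →+* ℝ[X]).mapMatrix U) * charmatrix B * ((C : ℝ →+* ℝ[X]).mapMatrix V) := by
    unfold charmatrix
    rw [mul_sub, sub_mul, _root_.map_mul, _root_.map_mul]
    congr 1
    have hcomm : Matrix.scalar N (X : ℝ[X]) * ((C : ℝ →+* ℝ[X]).mapMatrix V)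
        = ((C : ℝ →+* ℝ[X]).mapMatrix V) * Matrix.scalar N (X : ℝ[X]) :=
      Matrix.scalar_commute (X : ℝ[X]) (fun r => Commute.all _ _) _
    rw [mul_assoc, hcomm, ← mul_assoc, ← _root_.map_mul, hUV, _root_.map_one, one_mul]
  rw [Matrix.charpoly, key, Matrix.det_mul, Matrix.det_mul, Matrix.charpoly]
  have : ((C : ℝ →+* ℝ[X]).mapMatrix U).det * ((C : ℝ →+* ℝ[X]).mapMatrix V).det = 1 := by
    rw [← Matrix.det_mul, ← _root_.map_mul, hUV, _root_.map_one, Matrix.det_one]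
  ring_nf
  calc ((C : ℝ →+* ℝ[X]).mapMatrix U).det * (charmatrix B).det * ((C : ℝ →+* ℝ[X]).mapMatrix V).det
      = (charmatrix B).det * (((C : ℝ →+* ℝ[X]).mapMatrix U).det * ((C : ℝ →+* ℝ[X]).mapMatrix V).det) := by ring
    _ = (charmatrix B).det := by rw [this, mul_one]

private lemma charpoly_roots_eq_eigs {N : Type*} [Fintype N] [DecidableEq N]
    {A : Matrix N N ℝ} (hA : A.IsHermitian) :
    A.charpoly.roots = Finset.univ.val.map hA.eigenvalues := by
  have hU1 : (hA.eigenvectorUnitary : Matrix N N ℝ) * star (hA.eigenvectorUnitary : Matrix N N ℝ) = 1 :=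
    (Matrix.mem_unitaryGroup_iff).mp hA.eigenvectorUnitary.2
  have hU2 : star (hA.eigenvectorUnitary : Matrix N N ℝ) * (hA.eigenvectorUnitary : Matrix N N ℝ) = 1 :=
    (Matrix.mem_unitaryGroup_iff').mp hA.eigenvectorUnitary.2
  have hsp := hA.spectral_theorem
  have hd : (RCLike.ofReal ∘ hA.eigenvalues : N → ℝ) = hA.eigenvalues := by
    funext i; simp [RCLike.ofReal]
  rw [hd] at hsp
  rw [show A.charpoly = (Matrix.diagonal hA.eigenvalues).charpoly by
    conv_lhs => rw [hsp]
    exact charpoly_conj _ _ _ hU1 hU2]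
  rw [charpoly_diag]
  have := Polynomial.roots_multiset_prod_X_sub_C (Finset.univ.val.map hA.eigenvalues)
  rw [← this]
  congr 1
  rw [Multiset.map_map]
  rfl

private lemma quad_form_eq {N : Type*} [Fintype N] [DecidableEq N]
    {A : Matrix N N ℝ} (hA : A.IsHermitian) (x : N → ℝ) :
    x ⬝ᵥ A.mulVec x
      = ∑ j, hA.eigenvalues j *
          ((star (hA.eigenvectorUnitary : Matrix N N ℝ)).mulVec x j)^2 := by
  have hsp := hA.spectral_theorem
  have hd : (RCLike.ofReal ∘ hA.eigenvalues : N → ℝ) = hA.eigenvalues := by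
    funext i; simp [RCLike.ofReal]
  rw [hd] at hsp
  set U := (hA.eigenvectorUnitary : Matrix N N ℝ) with hU
  set y := (star U).mulVec x with hy
  have h1 : A.mulVec x = U.mulVec ((Matrix.diagonal hA.eigenvalues).mulVec y) := by
    conv_lhs => rw [hsp]
    rw [Unitary.conjStarAlgAut_apply, hy, ← Matrix.mulVec_mulVec, ← Matrix.mulVec_mulVec]
  rw [h1]
  have h2 : x ⬝ᵥ U.mulVec ((Matrix.diagonal hA.eigenvalues).mulVec y)
      = y ⬝ᵥ (Matrix.diagonal hA.eigenvalues).mulVec y := by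
    rw [Matrix.dotProduct_mulVec]
    congr 1
    rw [hy, Matrix.star_eq_conjTranspose, Matrix.conjTranspose_eq_transpose_of_trivial,
      Matrix.mulVec_transpose]
  rw [h2]
  simp only [dotProduct, Matrix.mulVec_diagonal]
  congr 1; funext j; ring

private lemma card_le_neg {N : Type*} [Fintype N] [DecidableEq N]
    {A : Matrix N N ℝ} (hA : A.IsHermitian) {ι : Type*} [Fintype ι] [DecidableEq ι]
    (v : ι → (N → ℝ))
    (hq : ∀ c : ι → ℝ, c ≠ 0 →
      (∑ i, c i • v i) ⬝ᵥ A.mulVec (∑ i, c i • v i) < 0) :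
    Fintype.card ι ≤ (Finset.univ.filter fun j => hA.eigenvalues j < 0).card := by
  classical
  set U := (hA.eigenvectorUnitary : Matrix N N ℝ)
  let Φ : (ι → ℝ) →ₗ[ℝ] ({j // hA.eigenvalues j < 0} → ℝ) :=
    { toFun := fun c j => (star U).mulVec (∑ i, c i • v i) j.1
      map_add' := by
        intro c c'; funext j
        simp [add_smul, Finset.sum_add_distrib, Matrix.mulVec_add]
      map_smul' := by
        intro r c; funext j
        simp [mul_smul, ← Finset.smul_sum, Matrix.mulVec_smul] }
  have hinj : Function.Injective Φ := by
    rw [← LinearMap.ker_eq_bot, LinearMap.ker_eq_bot']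
    intro c hc
    by_contra hc0
    have hx := hq c hc0
    rw [quad_form_eq hA] at hx
    have : (0:ℝ) ≤ ∑ j, hA.eigenvalues j *
        ((star U).mulVec (∑ i, c i • v i) j)^2 := by
      apply Finset.sum_nonneg
      intro j _
      by_cases h : hA.eigenvalues j < 0
      · have : (star U).mulVec (∑ i, c i • v i) j = 0 := congrFun hc ⟨j, h⟩
        rw [this]; ring_nf; simp
      · have h1 : 0 ≤ hA.eigenvalues j := le_of_not_gt h
        positivity
    linarith
  have := LinearMap.finrank_le_finrank_of_injective hinj
  rwa [Module.finrank_fintype_fun_eq_card, Module.finrank_fintype_fun_eq_card,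
    Fintype.card_subtype] at this

private lemma card_le_pos {N : Type*} [Fintype N] [DecidableEq N]
    {A : Matrix N N ℝ} (hA : A.IsHermitian) {ι : Type*} [Fintype ι] [DecidableEq ι]
    (v : ι → (N → ℝ))
    (hq : ∀ c : ι → ℝ, c ≠ 0 →
      0 < (∑ i, c i • v i) ⬝ᵥ A.mulVec (∑ i, c i • v i)) :
    Fintype.card ι ≤ (Finset.univ.filter fun j => 0 < hA.eigenvalues j).card := by
  classical
  set U := (hA.eigenvectorUnitary : Matrix N N ℝ)
  let Φ : (ι → ℝ) →ₗ[ℝ] ({j // 0 < hA.eigenvalues j} → ℝ) :=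
    { toFun := fun c j => (star U).mulVec (∑ i, c i • v i) j.1
      map_add' := by
        intro c c'; funext j
        simp [add_smul, Finset.sum_add_distrib, Matrix.mulVec_add]
      map_smul' := by
        intro r c; funext j
        simp [mul_smul, ← Finset.smul_sum, Matrix.mulVec_smul] }
  have hinj : Function.Injective Φ := by
    rw [← LinearMap.ker_eq_bot, LinearMap.ker_eq_bot']
    intro c hc
    by_contra hc0
    have hx := hq c hc0
    rw [quad_form_eq hA] at hx
    have : ∑ j, hA.eigenvalues j *
        ((star U).mulVec (∑ i, c i • v i) j)^2 ≤ 0 := by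
      apply Finset.sum_nonpos
      intro j _
      by_cases h : 0 < hA.eigenvalues j
      · have : (star U).mulVec (∑ i, c i • v i) j = 0 := congrFun hc ⟨j, h⟩
        rw [this]; ring_nf; simp
      · have h1 : hA.eigenvalues j ≤ 0 := le_of_not_gt h
        have h2 : (0:ℝ) ≤ ((star U).mulVec (∑ i, c i • v i) j)^2 := sq_nonneg _
        exact mul_nonpos_of_nonpos_of_nonneg h1 h2
    linarith
  have := LinearMap.finrank_le_finrank_of_injective hinj
  rwa [Module.finrank_fintype_fun_eq_card, Module.finrank_fintype_fun_eq_card,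
    Fintype.card_subtype] at this

private lemma exists_zero_eig {N : Type*} [Fintype N] [DecidableEq N]
    {A : Matrix N N ℝ} (hA : A.IsHermitian) (x : N → ℝ) (hx : x ≠ 0)
    (h0 : A.mulVec x = 0) : ∃ j, hA.eigenvalues j = 0 := by
  have hdet : A.det = 0 := by
    rw [← Matrix.exists_mulVec_eq_zero_iff]
    exact ⟨x, hx, h0⟩
  have hprod := hA.det_eq_prod_eigenvalues
  rw [hdet] at hprod
  have : ∏ i, hA.eigenvalues i = 0 := by
    rw [← hprod.symm] at *
    exact_mod_cast hprod.symm
  obtain ⟨j, _, hj⟩ := Finset.prod_eq_zero_iff.mp this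
  exact ⟨j, hj⟩

private lemma tri_card {N : Type*} [Fintype N] (f : N → ℝ) :
    (Finset.univ.filter fun j => f j < 0).card
      + ((Finset.univ.filter fun j => 0 < f j).card
      + (Finset.univ.filter fun j => f j = 0).card) = Fintype.card N := by
  classical
  have h2 : (Finset.univ.filter fun j => 0 < f j).card
      + (Finset.univ.filter fun j => f j = 0).card
      = (Finset.univ.filter fun j => ¬ f j < 0).card := by
    rw [← Finset.card_union_of_disjoint]
    · congr 1
      rw [← Finset.filter_or]
      apply Finset.filter_congr
      intro j _
      constructor
      · rintro (h | h) <;> simp [h, le_of_lt, not_lt] <;> linarith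
      · intro h
        rcases lt_or_eq_of_le (le_of_not_gt h) with h' | h'
        · exact Or.inl h'
        · exact Or.inr h'.symm
    · rw [Finset.disjoint_filter]
      intro j _ h
      exact fun h' => absurd h' (ne_of_gt h)
  rw [h2, Finset.card_filter_add_card_filter_not, Finset.card_univ]

private lemma sum_mulVec' {N ι : Type*} [Fintype N] [Fintype ι]
    (M : ι → Matrix N N ℝ) (x : N → ℝ) :
    (∑ i, M i) *ᵥ x = ∑ i, M i *ᵥ x := by
  funext j
  simp only [Matrix.mulVec, dotProduct, Matrix.sum_apply, Finset.sum_mul, Finset.sum_apply]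
  exact Finset.sum_comm

private lemma vecMulVec_mulVec' {N : Type*} [Fintype N] (a b x : N → ℝ) :
    Matrix.vecMulVec a b *ᵥ x = (b ⬝ᵥ x) • a := by
  funext j
  simp only [Matrix.mulVec, dotProduct, Matrix.vecMulVec_apply, Pi.smul_apply, smul_eq_mul,
    Finset.sum_mul]
  exact Finset.sum_congr rfl fun k _ => by ring

private lemma dotProduct_sum' {N ι : Type*} [Fintype N] [Fintype ι]
    (x : N → ℝ) (y : ι → N → ℝ) :
    x ⬝ᵥ (∑ i, y i) = ∑ i, x ⬝ᵥ y i := by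
  simp only [dotProduct, Finset.sum_apply, Finset.mul_sum]
  exact Finset.sum_comm

/-- The Hessian-type tridiagonal matrix
`H = Σ_i σ_i σ_{i+1} (e_i − e_{i+1})(e_i − e_{i+1})ᵀ` of the one-dimensional XY
model at the `±1` critical configuration `σ`, for `N = n + 2`. -/
noncomputable def XY1dHess (n : ℕ) (σ : Fin (n + 2) → ℝ) :
    Matrix (Fin (n + 2)) (Fin (n + 2)) ℝ :=
  ∑ i : Fin (n + 1),
    (σ i.castSucc * σ i.succ) •
      Matrix.vecMulVec (Pi.single i.castSucc (1 : ℝ) - Pi.single i.succ 1)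
        (Pi.single i.castSucc (1 : ℝ) - Pi.single i.succ 1)

private lemma hermH (n : ℕ) (σ : Fin (n + 2) → ℝ) : (XY1dHess n σ).IsHermitian := by
  show (XY1dHess n σ)ᴴ = XY1dHess n σ
  ext i j
  simp only [XY1dHess, Matrix.conjTranspose_apply, Matrix.sum_apply, Matrix.smul_apply,
    Matrix.vecMulVec_apply, smul_eq_mul, star_sum, star_mul', RCLike.star_def,
    Matrix.star_apply, star_trivial]
  exact Finset.sum_congr rfl fun k _ => by ring

private lemma quadH (n : ℕ) (σ : Fin (n + 2) → ℝ) (x : Fin (n + 2) → ℝ) :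
    x ⬝ᵥ (XY1dHess n σ) *ᵥ x
      = ∑ i : Fin (n + 1), (σ i.castSucc * σ i.succ) *
          ((Pi.single i.castSucc (1 : ℝ) - Pi.single i.succ 1) ⬝ᵥ x) ^ 2 := by
  rw [XY1dHess, sum_mulVec']
  have h1 : ∀ i : Fin (n + 1),
      ((σ i.castSucc * σ i.succ) • Matrix.vecMulVec
        (Pi.single i.castSucc (1 : ℝ) - Pi.single i.succ 1)
        (Pi.single i.castSucc (1 : ℝ) - Pi.single i.succ 1)) *ᵥ x
      = ((σ i.castSucc * σ i.succ) *
          ((Pi.single i.castSucc (1 : ℝ) - Pi.single i.succ 1) ⬝ᵥ x)) •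
          (Pi.single i.castSucc (1 : ℝ) - Pi.single i.succ 1) := by
    intro i
    rw [Matrix.smul_mulVec, vecMulVec_mulVec', smul_smul]
  simp_rw [h1]
  rw [dotProduct_sum']
  refine Finset.sum_congr rfl fun i _ => ?_
  rw [dotProduct_smul, smul_eq_mul, dotProduct_comm x]
  ring

private lemma mulVec_oneH (n : ℕ) (σ : Fin (n + 2) → ℝ) :
    (XY1dHess n σ).mulVec (fun _ => (1 : ℝ)) = 0 := by
  rw [XY1dHess, sum_mulVec']
  refine Finset.sum_eq_zero fun i _ => ?_
  rw [Matrix.smul_mulVec, vecMulVec_mulVec']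
  have : (Pi.single i.castSucc (1 : ℝ) - Pi.single i.succ 1) ⬝ᵥ (fun _ => (1 : ℝ)) = 0 := by
    rw [sub_dotProduct, single_dotProduct, single_dotProduct]
    norm_num
  rw [this, zero_smul, smul_zero]

private def gvec (n : ℕ) (i : Fin (n + 1)) : Fin (n + 2) → ℝ :=
  fun j => if (j : ℕ) ≤ (i : ℕ) then 1 else 0

private lemma w_dot_g (n : ℕ) (i i' : Fin (n + 1)) :
    (Pi.single i'.castSucc (1 : ℝ) - Pi.single i'.succ 1) ⬝ᵥ gvec n i
      = if i' = i then 1 else 0 := by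
  rw [sub_dotProduct, single_dotProduct, single_dotProduct]
  simp only [gvec, one_mul, Fin.coe_castSucc, Fin.val_succ]
  by_cases h : i' = i
  · subst h
    rw [if_pos le_rfl, if_neg (by omega), if_pos rfl]; norm_num
  · rw [if_neg h]
    have hne : (i' : ℕ) ≠ (i : ℕ) := fun hc => h (Fin.ext hc)
    by_cases h1 : (i' : ℕ) ≤ (i : ℕ)
    · rw [if_pos h1, if_pos (by omega)]; norm_num
    · rw [if_neg h1, if_neg (by omega)]; norm_num

/-- `H` annihilates the constant vector, and has exactly `n_d` negative and
`N − 1 − n_d` positive eigenvalues (counted with multiplicity), where `n_d` is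
the number of domain walls of `σ`. -/
theorem XY1d_hessian_index (n : ℕ) (σ : Fin (n + 2) → ℝ)
    (hσ : ∀ i, σ i = 1 ∨ σ i = -1) :
    (XY1dHess n σ).mulVec (fun _ => (1 : ℝ)) = 0 ∧
      (((XY1dHess n σ).charpoly.roots.filter (fun x => x < 0)).card =
        (Finset.univ.filter (fun i : Fin (n + 1) => σ i.castSucc ≠ σ i.succ)).card) ∧
      (((XY1dHess n σ).charpoly.roots.filter (fun x => 0 < x)).card =
        (n + 1) -
          (Finset.univ.filter (fun i : Fin (n + 1) => σ i.castSucc ≠ σ i.succ)).card) := by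
  classical
  have hherm := hermH n σ
  have hmul1 := mulVec_oneH n σ
  set eig := hherm.eigenvalues with heig
  set P : Fin (n + 1) → Prop := fun i => σ i.castSucc ≠ σ i.succ with hP
  set k := (Finset.univ.filter P).card with hk
  have hεneg : ∀ i : Fin (n + 1), P i → σ i.castSucc * σ i.succ = -1 := by
    intro i hi
    rcases hσ i.castSucc with h1 | h1 <;> rcases hσ i.succ with h2 | h2
    · exact absurd (h1.trans h2.symm) hi
    · rw [h1, h2]; norm_num
    · rw [h1, h2]; norm_num
    · exact absurd (h1.trans h2.symm) hi
  have hεpos : ∀ i : Fin (n + 1), ¬ P i → σ i.castSucc * σ i.succ = 1 := by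
    intro i hi
    have he : σ i.castSucc = σ i.succ := not_not.mp hi
    rcases hσ i.succ with h2 | h2 <;> rw [he, h2] <;> norm_num
  -- dot products with the dual family
  have hdot : ∀ (Q : Fin (n + 1) → Prop) [DecidablePred Q] (c : {i : Fin (n + 1) // Q i} → ℝ)
      (i' : Fin (n + 1)),
      (Pi.single i'.castSucc (1 : ℝ) - Pi.single i'.succ 1) ⬝ᵥ
          (∑ i : {i : Fin (n + 1) // Q i}, c i • gvec n i.1)
        = if h : Q i' then c ⟨i', h⟩ else 0 := by
    intro Q _ c i'
    rw [dotProduct_sum']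
    simp_rw [dotProduct_smul, w_dot_g, smul_eq_mul]
    by_cases h : Q i'
    · rw [dif_pos h]
      rw [Finset.sum_eq_single (⟨i', h⟩ : {i // Q i})]
      · rw [if_pos rfl, mul_one]
      · intro b _ hb
        rw [if_neg, mul_zero]
        exact fun he => hb (Subtype.ext he.symm)
      · intro hmem; exact absurd (Finset.mem_univ _) hmem
    · rw [dif_neg h]
      refine Finset.sum_eq_zero fun b _ => ?_
      rw [if_neg, mul_zero]
      exact fun he => h (he ▸ b.2)
  -- negative eigenvalue count lower bound
  have hneg : k ≤ (Finset.univ.filter fun j => eig j < 0).card := by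
    have hq : ∀ c : {i : Fin (n + 1) // P i} → ℝ, c ≠ 0 →
        (∑ i, c i • gvec n i.1) ⬝ᵥ (XY1dHess n σ) *ᵥ (∑ i, c i • gvec n i.1) < 0 := by
      intro c hc
      rw [quadH]
      simp_rw [hdot P c]
      obtain ⟨i0, hi0⟩ := Function.ne_iff.mp hc
      have hlt := Finset.sum_lt_sum
        (f := fun i' : Fin (n + 1) =>
          (σ i'.castSucc * σ i'.succ) * (if h : P i' then c ⟨i', h⟩ else 0) ^ 2)
        (g := fun _ => (0 : ℝ)) ?_ ⟨i0.1, Finset.mem_univ _, ?_⟩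
      · simpa using hlt
      · intro i' _
        by_cases h : P i'
        · rw [dif_pos h, hεneg i' h]
          nlinarith [sq_nonneg (c ⟨i', h⟩)]
        · rw [dif_neg h]; norm_num
      · have hi0' : c i0 ≠ 0 := hi0
        rw [dif_pos i0.2, hεneg i0.1 i0.2, Subtype.coe_eta]
        have h2 : 0 < (c i0) ^ 2 := by positivity
        linarith
    have hcard := card_le_neg hherm (fun i : {i : Fin (n + 1) // P i} => gvec n i.1) hq
    rwa [Fintype.card_subtype] at hcard
  -- positive eigenvalue count lower bound
  have hpos : (n + 1) - k ≤ (Finset.univ.filter fun j => 0 < eig j).card := by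
    have hq : ∀ c : {i : Fin (n + 1) // ¬ P i} → ℝ, c ≠ 0 →
        0 < (∑ i, c i • gvec n i.1) ⬝ᵥ (XY1dHess n σ) *ᵥ (∑ i, c i • gvec n i.1) := by
      intro c hc
      rw [quadH]
      simp_rw [hdot (fun i => ¬ P i) c]
      obtain ⟨i0, hi0⟩ := Function.ne_iff.mp hc
      have hlt := Finset.sum_lt_sum
        (f := fun _ : Fin (n + 1) => (0 : ℝ))
        (g := fun i' : Fin (n + 1) =>
          (σ i'.castSucc * σ i'.succ) * (if h : ¬ P i' then c ⟨i', h⟩ else 0) ^ 2)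
        ?_ ⟨i0.1, Finset.mem_univ _, ?_⟩
      · simpa using hlt
      · intro i' _
        by_cases h : ¬ P i'
        · rw [dif_pos h, hεpos i' h]
          nlinarith [sq_nonneg (c ⟨i', h⟩)]
        · rw [dif_neg h]; norm_num
      · have hi0' : c i0 ≠ 0 := hi0
        rw [dif_pos i0.2, hεpos i0.1 i0.2, Subtype.coe_eta]
        have h2 : 0 < (c i0) ^ 2 := by positivity
        linarith
    have hcard := card_le_pos hherm (fun i : {i : Fin (n + 1) // ¬ P i} => gvec n i.1) hq
    rwa [Fintype.card_subtype_compl, Fintype.card_subtype, Fintype.card_fin] at hcard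
  -- zero eigenvalue
  have hone : (fun _ : Fin (n + 2) => (1 : ℝ)) ≠ 0 := by
    intro h; exact one_ne_zero (congrFun h 0)
  obtain ⟨j0, hj0⟩ := exists_zero_eig hherm _ hone hmul1
  have hz : 1 ≤ (Finset.univ.filter fun j => eig j = 0).card :=
    Finset.card_pos.mpr ⟨j0, Finset.mem_filter.mpr ⟨Finset.mem_univ _, hj0⟩⟩
  have htri := tri_card eig
  rw [Fintype.card_fin] at htri
  have hk_le : k ≤ n + 1 := by
    calc k ≤ Finset.univ.card := Finset.card_filter_le _ _
    _ = n + 1 := by simp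
  have hnegeq : (Finset.univ.filter fun j => eig j < 0).card = k := by omega
  have hposeq : (Finset.univ.filter fun j => 0 < eig j).card = (n + 1) - k := by omega
  -- convert to charpoly roots
  have hroots := charpoly_roots_eq_eigs hherm
  have hcount : ∀ (p : ℝ → Prop) [DecidablePred p],
      ((XY1dHess n σ).charpoly.roots.filter p).card
        = (Finset.univ.filter fun j => p (eig j)).card := by
    intro p _
    rw [hroots, Multiset.filter_map, Multiset.card_map]
    rw [show (Finset.univ.filter fun j => p (eig j)).card
        = (Finset.univ.val.filter fun j => p (eig j)).card by rw [← Finset.filter_val]; rfl]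
    exact congrArg Multiset.card (Multiset.filter_congr fun x _ => Iff.rfl)
  refine ⟨hmul1, ?_, ?_⟩
  · rw [hcount (fun x => x < 0), hnegeq]
  · rw [hcount (fun x => 0 < x), hposeq]
end

section
/- Let N ≥ 2, let h > 0, and consider the one-dimensional XY potential V₁ with free boundary conditions. At the configuration φ = (0,0,…,0), the Hessian matrix of V₁ (the N×N matrix with entries ∂²V₁/∂φ_i ∂φ_j evaluated at φ = 0) is positive definite; in particular, φ = 0 is a nondegenerate local minimum of V₁. -/
open Real

/-- Partial derivative of a function of several real variables with respect to
the `i`-th variable, evaluated at `φ`. -/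
noncomputable def pderiv' {N : ℕ} (f : (Fin N → ℝ) → ℝ) (i : Fin N) (φ : Fin N → ℝ) : ℝ :=
  deriv (fun t => f (Function.update φ i t)) (φ i)

lemma hasDerivAt_upd {N : ℕ} (φ : Fin N → ℝ) (j k : Fin N) (s : ℝ) :
    HasDerivAt (fun t => Function.update φ j t k) (if k = j then 1 else 0) s := by
  simp only [Function.update_apply]
  split
  · simpa using hasDerivAt_id' s
  · exact hasDerivAt_const s _

lemma pderiv_XY (n : ℕ) (h : ℝ) (j : Fin (n+2)) (φ : Fin (n+2) → ℝ) :
    pderiv' (XY1dV n h) j φ =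
      (1/4) * ∑ i : Fin (n+1), Real.sin (φ i.succ - φ i.castSucc) *
        ((if (i.succ : Fin (n+2)) = j then 1 else 0) - (if (i.castSucc : Fin (n+2)) = j then 1 else 0))
      + h * Real.sin (φ j) := by
  have H : HasDerivAt (fun t => XY1dV n h (Function.update φ j t))
      ((1/4) * ∑ i : Fin (n+1), Real.sin (φ i.succ - φ i.castSucc) *
        ((if (i.succ : Fin (n+2)) = j then 1 else 0) - (if (i.castSucc : Fin (n+2)) = j then 1 else 0))
      + h * Real.sin (φ j)) (φ j) := by
    have h1 : HasDerivAt (fun t => ∑ i : Fin (n+1),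
        (1 - Real.cos (Function.update φ j t i.succ - Function.update φ j t i.castSucc)))
        (∑ i : Fin (n+1), Real.sin (φ i.succ - φ i.castSucc) *
          ((if (i.succ : Fin (n+2)) = j then 1 else 0) - (if (i.castSucc : Fin (n+2)) = j then 1 else 0))) (φ j) := by
      apply HasDerivAt.fun_sum
      intro i _
      have hu : HasDerivAt (fun t => Function.update φ j t i.succ - Function.update φ j t i.castSucc)
          ((if (i.succ : Fin (n+2)) = j then 1 else 0) - (if (i.castSucc : Fin (n+2)) = j then 1 else 0)) (φ j) :=
        (hasDerivAt_upd φ j i.succ (φ j)).sub (hasDerivAt_upd φ j i.castSucc (φ j))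
      have := (hu.cos).const_sub 1
      simpa [Function.update_eq_self, mul_comm] using this
    have h2 : HasDerivAt (fun t => ∑ i, Real.cos (Function.update φ j t i))
        (∑ i, -Real.sin (φ i) * (if i = j then 1 else 0)) (φ j) := by
      apply HasDerivAt.fun_sum
      intro i _
      have := (hasDerivAt_upd φ j i (φ j)).cos
      simpa [Function.update_eq_self] using this
    have := (h1.const_mul (1/4 : ℝ)).sub (h2.const_mul h)
    refine (this.congr_deriv ?_).congr_of_eventuallyEq (Filter.Eventually.of_forall fun t => ?_)
    · simp [Finset.mul_sum, Finset.sum_ite_eq', mul_comm]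
    · rfl
  unfold pderiv'
  exact H.deriv

lemma hess_XY (n : ℕ) (h : ℝ) (i j : Fin (n+2)) :
    pderiv' (pderiv' (XY1dV n h) j) i (0 : Fin (n+2) → ℝ) =
      (1/4) * ∑ k : Fin (n+1),
        ((if (k.succ : Fin (n+2)) = i then 1 else 0) - (if (k.castSucc : Fin (n+2)) = i then 1 else 0)) *
        ((if (k.succ : Fin (n+2)) = j then 1 else 0) - (if (k.castSucc : Fin (n+2)) = j then 1 else 0))
      + h * (if i = j then 1 else 0) := by
  have H : HasDerivAt (fun t => pderiv' (XY1dV n h) j (Function.update (0 : Fin (n+2) → ℝ) i t))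
      ((1/4) * ∑ k : Fin (n+1),
        ((if (k.succ : Fin (n+2)) = i then 1 else 0) - (if (k.castSucc : Fin (n+2)) = i then 1 else 0)) *
        ((if (k.succ : Fin (n+2)) = j then 1 else 0) - (if (k.castSucc : Fin (n+2)) = j then 1 else 0))
      + h * (if i = j then 1 else 0)) 0 := by
    have heq : (fun t => pderiv' (XY1dV n h) j (Function.update (0 : Fin (n+2) → ℝ) i t)) =
        (fun t => (1/4) * ∑ k : Fin (n+1),
          Real.sin (Function.update (0 : Fin (n+2) → ℝ) i t k.succ -
            Function.update (0 : Fin (n+2) → ℝ) i t k.castSucc) *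
          ((if (k.succ : Fin (n+2)) = j then 1 else 0) - (if (k.castSucc : Fin (n+2)) = j then 1 else 0))
        + h * Real.sin (Function.update (0 : Fin (n+2) → ℝ) i t j)) := by
      funext t; rw [pderiv_XY]
    rw [heq]
    have h1 : HasDerivAt (fun t => ∑ k : Fin (n+1),
        Real.sin (Function.update (0 : Fin (n+2) → ℝ) i t k.succ -
          Function.update (0 : Fin (n+2) → ℝ) i t k.castSucc) *
        ((if (k.succ : Fin (n+2)) = j then 1 else 0) - (if (k.castSucc : Fin (n+2)) = j then 1 else 0)))
        (∑ k : Fin (n+1),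
          ((if (k.succ : Fin (n+2)) = i then 1 else 0) - (if (k.castSucc : Fin (n+2)) = i then 1 else 0)) *
          ((if (k.succ : Fin (n+2)) = j then 1 else 0) - (if (k.castSucc : Fin (n+2)) = j then 1 else 0))) 0 := by
      apply HasDerivAt.fun_sum
      intro k _
      have hu : HasDerivAt (fun t => Function.update (0 : Fin (n+2) → ℝ) i t k.succ -
          Function.update (0 : Fin (n+2) → ℝ) i t k.castSucc)
          ((if (k.succ : Fin (n+2)) = i then 1 else 0) - (if (k.castSucc : Fin (n+2)) = i then 1 else 0)) 0 :=
        (hasDerivAt_upd _ i k.succ 0).sub (hasDerivAt_upd _ i k.castSucc 0)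
      have := hu.sin.mul_const
        ((if (k.succ : Fin (n+2)) = j then 1 else 0) - (if (k.castSucc : Fin (n+2)) = j then 1 else 0))
      simpa [Function.update_apply, mul_comm] using this
    have h2 : HasDerivAt (fun t => Real.sin (Function.update (0 : Fin (n+2) → ℝ) i t j))
        (if i = j then 1 else 0) 0 := by
      have := (hasDerivAt_upd (0 : Fin (n+2) → ℝ) i j 0).sin
      simpa [Function.update_apply, eq_comm] using this
    exact (h1.const_mul (1/4 : ℝ)).add (h2.const_mul h)
  have h0 : (0 : Fin (n+2) → ℝ) i = 0 := rfl
  unfold pderiv'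
  rw [h0]
  exact H.deriv

lemma quad_XY (n : ℕ) (h : ℝ) (x : Fin (n+2) → ℝ) :
    ∑ i, x i * ∑ j, (((1/4) * ∑ k : Fin (n+1),
        ((if (k.succ : Fin (n+2)) = i then (1:ℝ) else 0) - (if (k.castSucc : Fin (n+2)) = i then 1 else 0)) *
        ((if (k.succ : Fin (n+2)) = j then 1 else 0) - (if (k.castSucc : Fin (n+2)) = j then 1 else 0)))
      + h * (if i = j then 1 else 0)) * x j
    = (1/4) * ∑ k : Fin (n+1), (x k.succ - x k.castSucc)^2 + h * ∑ i, (x i)^2 := by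
  have hcol : ∀ (k : Fin (n+1)),
      (∑ j, ((if (k.succ : Fin (n+2)) = j then (1:ℝ) else 0) - (if (k.castSucc : Fin (n+2)) = j then 1 else 0)) * x j)
        = x k.succ - x k.castSucc := by
    intro k
    simp [sub_mul, Finset.sum_sub_distrib, ite_mul, Finset.sum_ite_eq]
  have hrow : ∀ i : Fin (n+2), (∑ j, (((1/4) * ∑ k : Fin (n+1),
        ((if (k.succ : Fin (n+2)) = i then (1:ℝ) else 0) - (if (k.castSucc : Fin (n+2)) = i then 1 else 0)) *
        ((if (k.succ : Fin (n+2)) = j then 1 else 0) - (if (k.castSucc : Fin (n+2)) = j then 1 else 0)))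
      + h * (if i = j then 1 else 0)) * x j)
      = (1/4) * ∑ k : Fin (n+1),
        ((if (k.succ : Fin (n+2)) = i then (1:ℝ) else 0) - (if (k.castSucc : Fin (n+2)) = i then 1 else 0)) *
          (x k.succ - x k.castSucc) + h * x i := by
    intro i
    rw [Finset.sum_congr rfl (fun j _ => add_mul _ _ _), Finset.sum_add_distrib]
    congr 1
    · rw [Finset.sum_congr rfl (fun j _ => mul_assoc _ _ _), ← Finset.mul_sum]
      congr 1
      rw [Finset.sum_congr rfl (fun j _ => Finset.sum_mul _ _ _), Finset.sum_comm]
      refine Finset.sum_congr rfl fun k _ => ?_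
      rw [← hcol k, Finset.mul_sum]
      exact Finset.sum_congr rfl fun j _ => (mul_assoc _ _ _)
    · simp [ite_mul, mul_ite, Finset.sum_ite_eq, Finset.mul_sum]
  rw [Finset.sum_congr rfl (fun i _ => by rw [hrow i])]
  rw [Finset.sum_congr rfl (fun i _ => mul_add (x i) _ _), Finset.sum_add_distrib]
  congr 1
  · rw [Finset.sum_congr rfl (fun i _ => by rw [Finset.mul_sum, Finset.mul_sum]), Finset.sum_comm,
      Finset.mul_sum]
    refine Finset.sum_congr rfl fun k _ => ?_
    rw [Finset.sum_congr rfl (fun i _ => (by ring :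
      x i * (1 / 4 * (((if (k.succ : Fin (n+2)) = i then (1:ℝ) else 0) - if (k.castSucc : Fin (n+2)) = i then 1 else 0) * (x k.succ - x k.castSucc)))
      = 1 / 4 * (x k.succ - x k.castSucc) * (((if (k.succ : Fin (n+2)) = i then (1:ℝ) else 0) - if (k.castSucc : Fin (n+2)) = i then 1 else 0) * x i))),
      ← Finset.mul_sum, hcol k]
    ring
  · rw [Finset.mul_sum]
    exact Finset.sum_congr rfl fun i _ => by ring

/-- At `φ = 0` the Hessian of the one-dimensional XY potential with `h > 0` is
positive definite; in particular `φ = 0` is a (nondegenerate) local minimum. -/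
theorem XY1d_hessian_posDef_at_zero (n : ℕ) (h : ℝ) (hh : 0 < h) :
    (Matrix.of fun i j : Fin (n + 2) =>
        pderiv' (pderiv' (XY1dV n h) j) i (0 : Fin (n + 2) → ℝ)).PosDef ∧
      IsLocalMin (XY1dV n h) (0 : Fin (n + 2) → ℝ) := by
  constructor
  · refine Matrix.PosDef.of_dotProduct_mulVec_pos ?_ ?_
    · ext i j
      simp only [Matrix.conjTranspose_apply, Matrix.of_apply, hess_XY, star_trivial]
      simp [mul_comm, eq_comm]
    · intro x hx
      have hgoal : dotProduct (star x) ((Matrix.of fun i j : Fin (n + 2) =>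
          pderiv' (pderiv' (XY1dV n h) j) i (0 : Fin (n + 2) → ℝ)).mulVec x)
          = (1/4) * ∑ k : Fin (n+1), (x k.succ - x k.castSucc)^2 + h * ∑ i, (x i)^2 := by
        rw [← quad_XY n h x]
        simp only [dotProduct, Matrix.mulVec, Matrix.of_apply, hess_XY, Pi.star_apply,
          star_trivial]
      rw [hgoal]
      have h2 : 0 < ∑ i, (x i)^2 := by
        obtain ⟨i, hi⟩ := Function.ne_iff.mp hx
        have hi' : x i ≠ 0 := hi
        exact Finset.sum_pos' (fun j _ => sq_nonneg _) ⟨i, Finset.mem_univ i, by positivity⟩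
      have h1 : (0:ℝ) ≤ (1/4) * ∑ k : Fin (n+1), (x k.succ - x k.castSucc)^2 := by positivity
      nlinarith [mul_pos hh h2]
  · have hmin : ∀ φ : Fin (n+2) → ℝ, XY1dV n h 0 ≤ XY1dV n h φ := by
      intro φ
      unfold XY1dV
      have A : (0:ℝ) ≤ (1/4) * ∑ i : Fin (n+1), (1 - Real.cos (φ i.succ - φ i.castSucc)) := by
        refine mul_nonneg (by norm_num) (Finset.sum_nonneg fun i _ => ?_)
        have := Real.cos_le_one (φ i.succ - φ i.castSucc)
        linarith
      have B : h * ∑ i, Real.cos (φ i) ≤ h * ∑ i : Fin (n+2), (1:ℝ) :=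
        mul_le_mul_of_nonneg_left (Finset.sum_le_sum fun i _ => Real.cos_le_one _) hh.le
      have C : ((0:Fin (n+2) → ℝ)) = fun _ => (0:ℝ) := rfl
      simp only [C, sub_zero, Real.cos_zero, sub_self, Finset.sum_const, Finset.card_univ,
        Fintype.card_fin, nsmul_eq_mul, mul_zero, Finset.sum_ite_eq]
      have : (∑ i : Fin (n+1), (0:ℝ)) = 0 := Finset.sum_const_zero
      simp only [this, mul_zero, zero_sub]
      have B' : h * ∑ i, Real.cos (φ i) ≤ h * ((n:ℝ) + 2) := by
        simpa using B
      have hcast : h * (((n+2:ℕ):ℝ) * 1) = h * ((n:ℝ) + 2) := by push_cast; ring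
      linarith
    exact Filter.Eventually.of_forall fun φ => hmin φ
end

section
/- (Sturm sequence count for tridiagonal symmetric matrices.) Let H be an N×N real symmetric tridiagonal matrix with diagonal entries α_1,…,α_N and off-diagonal entries β_1,…,β_{N−1}, all β_i ≠ 0. For λ ∈ ℝ define the sequence p_0(λ) = 1, p_1(λ) = α_1 − λ, and p_k(λ) = (α_k − λ) p_{k−1}(λ) − β_{k−1}² p_{k−2}(λ) for k = 2,…,N, so that p_N(λ) = det(H − λI). Then the number of sign changes in the sequence (p_0(λ), p_1(λ), …, p_N(λ)) — with the convention that if p_i(λ) = 0 it is assigned the sign opposite to that of p_{i−1}(λ) — equals the number of eigenvalues of H, counted with multiplicity, that are less than or equal to λ. -/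
open Polynomial Filter Finset

noncomputable def sturmQ (a b : ℕ → ℝ) : ℕ → Polynomial ℝ
  | 0 => 1
  | 1 => Polynomial.C (a 0) - Polynomial.X
  | (k+2) => (Polynomial.C (a (k+1)) - Polynomial.X) * sturmQ a b (k+1)
      - Polynomial.C (b k) ^ 2 * sturmQ a b k

section helpers
lemma factor_eq (c : ℝ) : (C c - X) = -(X - C c) := by ring
lemma factor_natDegree (c : ℝ) : (C c - X).natDegree = 1 := by
  rw [factor_eq, Polynomial.natDegree_neg, Polynomial.natDegree_X_sub_C]
lemma factor_degree (c : ℝ) : (C c - X).degree = 1 := by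
  rw [factor_eq, Polynomial.degree_neg, Polynomial.degree_X_sub_C]
lemma factor_ne_zero (c : ℝ) : (C c - X) ≠ 0 := fun h => by
  have := congrArg Polynomial.natDegree h
  rw [factor_natDegree] at this; simp at this
lemma factor_leadingCoeff (c : ℝ) : (C c - X).leadingCoeff = -1 := by
  rw [factor_eq, Polynomial.leadingCoeff_neg, (Polynomial.monic_X_sub_C c).leadingCoeff]
lemma prodform_natDegree {m : ℕ} (t : Fin m → ℝ) :
    (∏ i, (C (t i) - X)).natDegree = m := by
  rw [Polynomial.natDegree_prod _ _ (fun i _ => factor_ne_zero (t i))]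
  simp [factor_natDegree]
lemma prodform_ne_zero {m : ℕ} (t : Fin m → ℝ) : (∏ i, (C (t i) - X)) ≠ 0 :=
  Finset.prod_ne_zero_iff.2 (fun i _ => factor_ne_zero (t i))
lemma prodform_leadingCoeff {m : ℕ} (t : Fin m → ℝ) :
    (∏ i, (C (t i) - X)).leadingCoeff = (-1) ^ m := by
  rw [Polynomial.leadingCoeff_prod]; simp [factor_leadingCoeff]
lemma prodform_eval {m : ℕ} (t : Fin m → ℝ) (x : ℝ) :
    Polynomial.eval x (∏ i, (C (t i) - X)) = ∏ i, (t i - x) := by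
  simp [Polynomial.eval_prod]
lemma prodform_roots {m : ℕ} (t : Fin m → ℝ) :
    (∏ i, (C (t i) - X)).roots = Finset.univ.val.map t := by
  rw [Polynomial.roots_prod _ _ (prodform_ne_zero t)]
  have h : ∀ i : Fin m, (C (t i) - X).roots = {t i} := fun i => by
    rw [factor_eq, Polynomial.roots_neg, Polynomial.roots_X_sub_C]
  simp only [h]
  exact Multiset.bind_singleton _ _
lemma prodform_degree {m : ℕ} (t : Fin m → ℝ) :
    (∏ i, (C (t i) - X)).degree = (m : WithBot ℕ) := by
  rw [Polynomial.degree_eq_natDegree (prodform_ne_zero t), prodform_natDegree]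
end helpers

lemma poly_ivt (p : Polynomial ℝ) {x y : ℝ} (hxy : x < y)
    (h : Polynomial.eval x p * Polynomial.eval y p < 0) :
    ∃ z, x < z ∧ z < y ∧ Polynomial.eval z p = 0 := by
  have hc : ContinuousOn (fun u => Polynomial.eval u p) (Set.Icc x y) :=
    (Polynomial.continuous p).continuousOn
  rcases mul_neg_iff.1 h with ⟨hx, hy⟩ | ⟨hx, hy⟩
  · obtain ⟨z, hz, hz0⟩ := intermediate_value_Ioo' hxy.le hc (Set.mem_Ioo.2 ⟨hy, hx⟩)
    exact ⟨z, hz.1, hz.2, hz0⟩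
  · obtain ⟨z, hz, hz0⟩ := intermediate_value_Ioo hxy.le hc (Set.mem_Ioo.2 ⟨hx, hy⟩)
    exact ⟨z, hz.1, hz.2, hz0⟩

lemma poly_root_above (p : Polynomial ℝ)
    (htop : Tendsto (fun u => Polynomial.eval u p) atTop atTop)
    {x : ℝ} (hx : Polynomial.eval x p < 0) :
    ∃ z, x < z ∧ Polynomial.eval z p = 0 := by
  obtain ⟨y, hy1, hy2⟩ := ((htop.eventually (eventually_gt_atTop 0)).and
    (eventually_gt_atTop x)).exists
  obtain ⟨z, hz1, _, hz3⟩ := poly_ivt p hy2 (mul_neg_of_neg_of_pos hx hy1)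
  exact ⟨z, hz1, hz3⟩

lemma poly_root_below (p : Polynomial ℝ)
    (hbot : Tendsto (fun u => Polynomial.eval u p) atBot atTop)
    {x : ℝ} (hx : Polynomial.eval x p < 0) :
    ∃ z, z < x ∧ Polynomial.eval z p = 0 := by
  obtain ⟨y, hy1, hy2⟩ := ((hbot.eventually (eventually_gt_atTop 0)).and
    (eventually_lt_atBot x)).exists
  obtain ⟨z, _, hz2, hz3⟩ := poly_ivt p hy2 (by nlinarith)
  exact ⟨z, hz2, hz3⟩

lemma poly_tendsto_atBot_atTop (p : Polynomial ℝ)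
    (h : Tendsto (fun u => Polynomial.eval u (p.comp (-Polynomial.X))) atTop atTop) :
    Tendsto (fun u => Polynomial.eval u p) atBot atTop := by
  have := h.comp (tendsto_neg_atBot_atTop (G := ℝ))
  convert this using 1
  funext u
  simp [Function.comp, Polynomial.eval_comp]

lemma prod_sign_count {k : ℕ} (f : Fin k → ℝ) (hnz : ∀ i, f i ≠ 0) :
    0 < (-1 : ℝ) ^ ((Finset.univ.filter (fun i => f i < 0)).card) * ∏ i, f i := by
  classical
  rw [← Finset.prod_filter_mul_prod_filter_not Finset.univ (fun i => f i < 0) f]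
  set s : ℝ := (-1 : ℝ) ^ ((Finset.univ.filter (fun i => f i < 0)).card) with hs
  have h1 : ∏ i ∈ Finset.univ.filter (fun i => f i < 0), f i
      = s * ∏ i ∈ Finset.univ.filter (fun i => f i < 0), (-f i) := by
    rw [hs, ← Finset.prod_const, ← Finset.prod_mul_distrib]
    exact Finset.prod_congr rfl (fun i _ => by ring)
  rw [h1]
  have h2 : (0:ℝ) < ∏ i ∈ Finset.univ.filter (fun i => f i < 0), (-f i) :=
    Finset.prod_pos (fun i hi => by
      simp only [Finset.mem_filter] at hi; linarith [hi.2])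
  have h3 : (0:ℝ) < ∏ i ∈ Finset.univ.filter (fun i => ¬ f i < 0), f i :=
    Finset.prod_pos (fun i hi => by
      simp only [Finset.mem_filter] at hi
      rcases (hnz i).lt_or_gt with h | h
      · exact absurd h hi.2
      · exact h)
  have h4 : s ^ 2 = 1 := by rw [hs, ← pow_mul, mul_comm, pow_mul]; simp
  have h5 : s * ((s * ∏ i ∈ Finset.univ.filter (fun i => f i < 0), (-f i))
      * ∏ i ∈ Finset.univ.filter (fun i => ¬ f i < 0), f i)
      = s ^ 2 * ((∏ i ∈ Finset.univ.filter (fun i => f i < 0), (-f i))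
      * ∏ i ∈ Finset.univ.filter (fun i => ¬ f i < 0), f i) := by ring
  rw [h5, h4, one_mul]
  exact mul_pos h2 h3

lemma card_filter_coe_lt (k m : ℕ) (hm : m ≤ k) :
    ((Finset.univ : Finset (Fin k)).filter (fun (i : Fin k) => (i : ℕ) < m)).card = m := by
  classical
  have h : ((Finset.univ : Finset (Fin k)).filter (fun (i : Fin k) => (i : ℕ) < m)).card
      = (Finset.range m).card := by
    apply Finset.card_bij (fun (i : Fin k) _ => (i : ℕ))
    · intro i hi; simp only [Finset.mem_filter] at hi; simpa using hi.2
    · intro i _ j _ h; exact Fin.val_injective h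
    · intro j hj
      simp only [Finset.mem_range] at hj
      exact ⟨⟨j, lt_of_lt_of_le hj hm⟩, by simp [hj], rfl⟩
  rw [h, Finset.card_range]

theorem sturmQ_roots (a b : ℕ → ℝ) (hb : ∀ k, b k ≠ 0) :
    ∀ k : ℕ, ∃ (t : Fin (k+1) → ℝ) (r : Fin k → ℝ),
      StrictMono t ∧
      sturmQ a b (k+1) = ∏ i, (C (t i) - X) ∧
      sturmQ a b k = ∏ i, (C (r i) - X) ∧
      (∀ i : Fin k, t i.castSucc < r i ∧ r i < t i.succ) := by
  intro k
  induction k with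
  | zero =>
    refine ⟨fun _ => a 0, Fin.elim0, ?_, ?_, ?_, fun i => i.elim0⟩
    · intro i j h
      simp only [Fin.lt_def] at h
      omega
    · show C (a 0) - X = _
      rw [Fin.prod_univ_one]
    · show (1 : Polynomial ℝ) = _
      rw [Finset.univ_eq_empty, Finset.prod_empty]
  | succ k ih =>
    obtain ⟨t, r, hmono, hQ1, hQ0, hint⟩ := ih
    set g := sturmQ a b (k+2) with hgdef
    have hgrec : g = (C (a (k+1)) - X) * sturmQ a b (k+1) - C (b k) ^ 2 * sturmQ a b k := rfl
    -- degree and leading coefficient of g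
    have hdegA : ((C (a (k+1)) - X) * sturmQ a b (k+1)).degree = ((k+2 : ℕ) : WithBot ℕ) := by
      rw [Polynomial.degree_mul, factor_degree, hQ1, prodform_degree]
      rw [show ((k+2 : ℕ) : WithBot ℕ) = ((1 : ℕ) : WithBot ℕ) + ((k+1 : ℕ) : WithBot ℕ) by
        rw [← Nat.cast_add]; congr 1; omega]
      norm_num
    have hdegB : (C (b k) ^ 2 * sturmQ a b k).degree ≤ ((k : ℕ) : WithBot ℕ) := by
      rw [hQ0]
      calc (C (b k) ^ 2 * ∏ i, (C (r i) - X)).degree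
          ≤ (C (b k) ^ 2).degree + (∏ i, (C (r i) - X)).degree := Polynomial.degree_mul_le _ _
        _ ≤ 0 + ((k : ℕ) : WithBot ℕ) := by
            apply add_le_add
            · rw [← map_pow]; exact Polynomial.degree_C_le
            · rw [prodform_degree]
        _ = ((k : ℕ) : WithBot ℕ) := by rw [zero_add]
    have hdegBA : (C (b k) ^ 2 * sturmQ a b k).degree
        < ((C (a (k+1)) - X) * sturmQ a b (k+1)).degree := by
      rw [hdegA]
      exact lt_of_le_of_lt hdegB (by exact_mod_cast Nat.lt_succ_of_lt (Nat.lt_succ_self k))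
    have hgdeg : g.degree = ((k+2 : ℕ) : WithBot ℕ) := by
      rw [hgrec, Polynomial.degree_sub_eq_left_of_degree_lt hdegBA, hdegA]
    have hglc : g.leadingCoeff = (-1) ^ (k+2) := by
      rw [hgrec, Polynomial.leadingCoeff_sub_of_degree_lt hdegBA,
        Polynomial.leadingCoeff_mul, factor_leadingCoeff, hQ1, prodform_leadingCoeff]
      ring
    have hgnat : g.natDegree = k + 2 := Polynomial.natDegree_eq_of_degree_eq_some hgdeg
    have hgne : g ≠ 0 := fun h => by
      rw [h, Polynomial.natDegree_zero] at hgnat; exact absurd hgnat.symm (by omega)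
    -- sign of g at the roots t j
    have hbk2 : (0:ℝ) < (b k) ^ 2 := by
      have := hb k; positivity
    have hsign : ∀ j : Fin (k+1), 0 < (-1 : ℝ) ^ ((j : ℕ) + 1) * Polynomial.eval (t j) g := by
      intro j
      have hzero : Polynomial.eval (t j) (sturmQ a b (k+1)) = 0 := by
        rw [hQ1, prodform_eval]
        exact Finset.prod_eq_zero (Finset.mem_univ j) (by ring)
      have heval : Polynomial.eval (t j) g
          = -(b k) ^ 2 * Polynomial.eval (t j) (sturmQ a b k) := by
        rw [hgrec]
        simp only [Polynomial.eval_sub, Polynomial.eval_mul, hzero, mul_zero, zero_sub,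
          Polynomial.eval_pow, Polynomial.eval_C]
        ring
      have hrt : ∀ i : Fin k, (r i < t j ↔ (i : ℕ) < (j : ℕ)) := by
        intro i
        constructor
        · intro h
          by_contra hc
          push_neg at hc
          have : t j ≤ t i.castSucc := hmono.monotone (by
            simp [Fin.le_def, Fin.coe_castSucc]; omega)
          linarith [(hint i).1]
        · intro h
          have : t i.succ ≤ t j := hmono.monotone (by
            simp [Fin.le_def, Fin.val_succ]; omega)
          linarith [(hint i).2]
      have hgt : ∀ i : Fin k, (j : ℕ) ≤ (i : ℕ) → t j < r i := by
        intro i hji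
        have : t j ≤ t i.castSucc := hmono.monotone (by
          simp only [Fin.le_def, Fin.coe_castSucc]; omega)
        linarith [(hint i).1]
      have hnz : ∀ i : Fin k, r i - t j ≠ 0 := by
        intro i h
        have h' : r i = t j := by linarith [sub_eq_zero.1 h]
        rcases lt_or_ge (i : ℕ) (j : ℕ) with hc | hc
        · have := (hrt i).2 hc; linarith
        · have := hgt i hc; linarith
      have hcount : (Finset.univ.filter (fun i : Fin k => r i - t j < 0))
          = (Finset.univ.filter (fun (i : Fin k) => (i : ℕ) < (j : ℕ))) := by
        apply Finset.filter_congr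
        intro i _
        rw [sub_neg]
        exact ⟨fun h => (hrt i).1 h, fun h => (hrt i).2 h⟩
      have hps := prod_sign_count (fun i => r i - t j) hnz
      rw [show (Finset.univ.filter (fun i : Fin k => (fun i => r i - t j) i < 0))
          = (Finset.univ.filter (fun (i : Fin k) => (i : ℕ) < (j : ℕ))) from hcount,
        card_filter_coe_lt k (j : ℕ) (by omega)] at hps
      have hevalQk : Polynomial.eval (t j) (sturmQ a b k) = ∏ i, (r i - t j) := by
        rw [hQ0, prodform_eval]
      rw [heval, hevalQk, pow_succ]
      nlinarith [mul_pos hbk2 hps]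
    -- outer root below t 0
    have hT0 : Polynomial.eval (t 0) g < 0 := by
      have h := hsign 0
      simp only [Fin.val_zero, zero_add, pow_one, neg_one_mul, neg_pos] at h
      exact h
    have hbot : Tendsto (fun x => Polynomial.eval x g) atBot atTop := by
      apply poly_tendsto_atBot_atTop
      apply Polynomial.tendsto_atTop_of_leadingCoeff_nonneg
      · rw [← Polynomial.natDegree_pos_iff_degree_pos, Polynomial.natDegree_comp]
        simp [hgnat]
      · rw [Polynomial.leadingCoeff_comp (by simp), hglc]
        have h1 : ((-Polynomial.X : Polynomial ℝ)).leadingCoeff = -1 := by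
          rw [Polynomial.leadingCoeff_neg, Polynomial.leadingCoeff_X]
        rw [h1, hgnat]
        have : ((-1:ℝ)) ^ (k+2) * ((-1:ℝ)) ^ (k+2) = 1 := by
          rw [← pow_add]
          exact Even.neg_one_pow ⟨k+2, by ring⟩
        rw [this]
        norm_num
    obtain ⟨lo, hlo1, hlo2⟩ := poly_root_below g hbot hT0
    -- outer root above t last
    have hTlast := hsign (Fin.last k)
    rw [Fin.val_last] at hTlast
    have htoproot : ∃ z, t (Fin.last k) < z ∧ Polynomial.eval z g = 0 := by
      rcases Nat.even_or_odd k with he | ho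
      · have hlc1 : (0:ℝ) ≤ g.leadingCoeff := by
          rw [hglc, Even.neg_one_pow (he.add even_two)]; norm_num
        have htt : Tendsto (fun x => Polynomial.eval x g) atTop atTop := by
          apply Polynomial.tendsto_atTop_of_leadingCoeff_nonneg _ _ hlc1
          rw [← Polynomial.natDegree_pos_iff_degree_pos, hgnat]; omega
        have hneg : Polynomial.eval (t (Fin.last k)) g < 0 := by
          rw [Odd.neg_one_pow (Even.add_one he)] at hTlast
          linarith
        exact poly_root_above g htt hneg
      · have hlc1 : (0:ℝ) ≤ (-g).leadingCoeff := by
          rw [Polynomial.leadingCoeff_neg, hglc, Odd.neg_one_pow (ho.add_even even_two)]; norm_num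
        have htt : Tendsto (fun x => Polynomial.eval x (-g)) atTop atTop := by
          apply Polynomial.tendsto_atTop_of_leadingCoeff_nonneg _ _ hlc1
          rw [← Polynomial.natDegree_pos_iff_degree_pos, Polynomial.natDegree_neg, hgnat]; omega
        have hneg : Polynomial.eval (t (Fin.last k)) (-g) < 0 := by
          rw [Even.neg_one_pow (Odd.add_one ho)] at hTlast
          simp only [Polynomial.eval_neg]
          linarith
        obtain ⟨z, hz1, hz2⟩ := poly_root_above (-g) htt hneg
        exact ⟨z, hz1, by simpa using hz2⟩
    obtain ⟨hi, hhi1, hhi2⟩ := htoproot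
    -- middle roots
    have hmid : ∀ j : Fin k, ∃ z, t j.castSucc < z ∧ z < t j.succ ∧ Polynomial.eval z g = 0 := by
      intro j
      have h1 := hsign j.castSucc
      have h2 := hsign j.succ
      rw [Fin.coe_castSucc] at h1
      rw [Fin.val_succ] at h2
      apply poly_ivt g (hmono (Fin.castSucc_lt_succ (i := j)))
      have hmm := mul_pos h1 h2
      have hkey : ((-1:ℝ)^((j:ℕ)+1) * Polynomial.eval (t j.castSucc) g)
          * ((-1)^((j:ℕ)+1+1) * Polynomial.eval (t j.succ) g)
          = - (Polynomial.eval (t j.castSucc) g * Polynomial.eval (t j.succ) g) := by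
        have h4 : (-1:ℝ)^((j:ℕ)+1) * (-1)^((j:ℕ)+1+1) = -1 := by
          rw [← pow_add, show (j:ℕ)+1+((j:ℕ)+1+1) = 2*((j:ℕ)+1)+1 by ring, pow_succ, pow_mul]
          simp
        calc ((-1:ℝ)^((j:ℕ)+1) * Polynomial.eval (t j.castSucc) g)
            * ((-1)^((j:ℕ)+1+1) * Polynomial.eval (t j.succ) g)
            = ((-1:ℝ)^((j:ℕ)+1) * (-1)^((j:ℕ)+1+1))
              * (Polynomial.eval (t j.castSucc) g * Polynomial.eval (t j.succ) g) := by ring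
          _ = - (Polynomial.eval (t j.castSucc) g * Polynomial.eval (t j.succ) g) := by
              rw [h4]; ring
      rw [hkey] at hmm
      linarith
    choose mid hmid1 hmid2 hmid3 using hmid
    -- assemble the new root vector
    set u : Fin (k+2) → ℝ :=
      fun j => Fin.cases lo (fun j' => Fin.lastCases hi (fun j'' => mid j'') j') j with hu
    have hu0 : u 0 = lo := rfl
    have husucc : ∀ j' : Fin (k+1), u j'.succ = Fin.lastCases hi (fun j'' => mid j'') j' :=
      fun j' => by simp [hu]
    have hulast : u (Fin.last (k+1)) = hi := by
      rw [← Fin.succ_last, husucc, Fin.lastCases_last]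
    have humid : ∀ j : Fin k, u j.castSucc.succ = mid j := fun j => by
      rw [husucc, Fin.lastCases_castSucc]
    have hintnew : ∀ j : Fin (k+1), u j.castSucc < t j ∧ t j < u j.succ := by
      intro j
      constructor
      · refine Fin.cases ?_ ?_ j
        · exact hlo1
        · intro i
          rw [← Fin.succ_castSucc, humid]
          exact hmid2 i
      · refine Fin.lastCases ?_ ?_ j
        · rw [Fin.succ_last, hulast]
          exact hhi1
        · intro i
          rw [humid]
          exact hmid1 i
    have humono : StrictMono u :=
      Fin.strictMono_iff_lt_succ.2 (fun j => lt_trans (hintnew j).1 (hintnew j).2)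
    have huroot : ∀ j : Fin (k+2), Polynomial.eval (u j) g = 0 := by
      refine Fin.cases ?_ ?_
      · exact hlo2
      · intro i
        refine Fin.lastCases ?_ ?_ i
        · rw [Fin.succ_last, hulast]
          exact hhi2
        · intro j
          rw [humid]
          exact hmid3 j
    -- product form for g
    have hMnodup : (Finset.univ.val.map u).Nodup :=
      Multiset.Nodup.map humono.injective Finset.univ.nodup
    have hM : (Finset.univ.val.map u) ≤ g.roots := by
      rw [Multiset.le_iff_subset hMnodup]
      intro x hx
      obtain ⟨i, _, rfl⟩ := Multiset.mem_map.1 hx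
      rw [Polynomial.mem_roots hgne]
      exact huroot i
    have hcards : Multiset.card g.roots = k + 2 := by
      apply le_antisymm
      · rw [← hgnat]; exact Polynomial.card_roots' g
      · calc (k+2 : ℕ) = Multiset.card (Finset.univ.val.map u) := by simp
          _ ≤ Multiset.card g.roots := Multiset.card_le_card hM
    have hMeq : Finset.univ.val.map u = g.roots :=
      Multiset.eq_of_le_of_card_le hM (by rw [hcards]; simp)
    have hsplit : Multiset.card g.roots = g.natDegree := by rw [hcards, hgnat]
    have hprod : g = ∏ i, (C (u i) - X) := by
      have hfact := (Polynomial.C_leadingCoeff_mul_prod_multiset_X_sub_C hsplit).symm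
      rw [hglc, ← hMeq, Multiset.map_map] at hfact
      have hm2 : ((Finset.univ.val.map (fun i => X - C (u i))).prod : Polynomial ℝ)
          = ∏ i, (X - C (u i)) := (Finset.prod_eq_multiset_prod _ _).symm
      rw [Function.comp_def, hm2] at hfact
      have hrhs : ∏ i : Fin (k+2), (C (u i) - X)
          = (-1 : Polynomial ℝ)^(k+2) * ∏ i, (X - C (u i)) := by
        have : ∀ i : Fin (k+2), (C (u i) - X) = (-1) * (X - C (u i)) := fun i => by ring
        calc ∏ i : Fin (k+2), (C (u i) - X) = ∏ i : Fin (k+2), (-1) * (X - C (u i)) :=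
              Finset.prod_congr rfl (fun i _ => this i)
          _ = (∏ _i : Fin (k+2), (-1 : Polynomial ℝ)) * ∏ i, (X - C (u i)) :=
              Finset.prod_mul_distrib
          _ = (-1 : Polynomial ℝ)^(k+2) * ∏ i, (X - C (u i)) := by
              rw [Finset.prod_const]; simp
      rw [hrhs, show ((-1 : Polynomial ℝ)^(k+2)) = C ((-1:ℝ)^(k+2)) by simp [map_pow]]
      exact hfact
    exact ⟨u, t, humono, hprod, hQ1, hintnew⟩

lemma filter_roots_card (lam : ℝ) {m : ℕ} (t : Fin m → ℝ) :
    (Multiset.card ((Finset.univ.val.map t).filter (fun x => x ≤ lam)))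
      = ((Finset.univ : Finset (Fin m)).filter (fun i => t i ≤ lam)).card := by
  classical
  rw [Multiset.filter_map, Multiset.card_map]
  rfl

section counting

variable (a b : ℕ → ℝ) (hb : ∀ k, b k ≠ 0) (lam : ℝ)

noncomputable def sturmC (a b : ℕ → ℝ) (lam : ℝ) (k : ℕ) : ℕ :=
  Multiset.card (((sturmQ a b k).roots).filter (fun x => x ≤ lam))

lemma sturmC_zero : sturmC a b lam 0 = 0 := by
  unfold sturmC
  show Multiset.card (((1 : Polynomial ℝ).roots).filter _) = 0
  rw [Polynomial.roots_one]
  rfl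

lemma sturmC_of_prod {m : ℕ} (t : Fin m → ℝ) (h : sturmQ a b m = ∏ i, (C (t i) - X)) :
    sturmC a b lam m = ((Finset.univ : Finset (Fin m)).filter (fun i => t i ≤ lam)).card := by
  unfold sturmC
  rw [h, prodform_roots, filter_roots_card]

include hb in
lemma sturmC_sign (k : ℕ) (hne : Polynomial.eval lam (sturmQ a b k) ≠ 0) :
    Real.sign (Polynomial.eval lam (sturmQ a b k)) = (-1 : ℝ) ^ (sturmC a b lam k) := by
  classical
  cases k with
  | zero =>
    show Real.sign (Polynomial.eval lam 1) = _
    rw [sturmC_zero, Polynomial.eval_one, Real.sign_one, pow_zero]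
  | succ m =>
    obtain ⟨t, r, hmono, hQ1, hQ0, hint⟩ := sturmQ_roots a b hb m
    have heval : Polynomial.eval lam (sturmQ a b (m+1)) = ∏ i, (t i - lam) := by
      rw [hQ1, prodform_eval]
    have hnz : ∀ i : Fin (m+1), t i - lam ≠ 0 := by
      intro i h
      rw [heval] at hne
      exact hne (Finset.prod_eq_zero (Finset.mem_univ i) h)
    have hps := prod_sign_count (fun i => t i - lam) hnz
    have hfc : (Finset.univ.filter (fun i : Fin (m+1) => t i - lam < 0))
        = (Finset.univ.filter (fun i : Fin (m+1) => t i ≤ lam)) := by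
      apply Finset.filter_congr
      intro i _
      constructor
      · intro h; linarith [h]
      · intro h
        rcases lt_or_eq_of_le h with h' | h'
        · linarith
        · exact absurd (by rw [h']; ring) (hnz i)
    rw [show (Finset.univ.filter (fun i : Fin (m+1) => (fun i => t i - lam) i < 0))
        = (Finset.univ.filter (fun i : Fin (m+1) => t i ≤ lam)) from hfc] at hps
    rw [← sturmC_of_prod a b lam t hQ1] at hps
    rw [heval]
    rcases Nat.even_or_odd (sturmC a b lam (m+1)) with he | ho
    · rw [Even.neg_one_pow he] at hps ⊢
      rw [one_mul] at hps
      exact Real.sign_of_pos hps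
    · rw [Odd.neg_one_pow ho] at hps ⊢
      have : ∏ i, (t i - lam) < 0 := by linarith
      exact Real.sign_of_neg this

include hb in
lemma sturmC_succ_of_root (k : ℕ) (hz : Polynomial.eval lam (sturmQ a b (k+1)) = 0) :
    sturmC a b lam (k+1) = sturmC a b lam k + 1 := by
  classical
  obtain ⟨t, r, hmono, hQ1, hQ0, hint⟩ := sturmQ_roots a b hb k
  rw [hQ1, prodform_eval] at hz
  obtain ⟨j, _, hj⟩ := Finset.prod_eq_zero_iff.1 hz
  have hj' : t j = lam := by linarith [sub_eq_zero.1 hj]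
  rw [sturmC_of_prod a b lam t hQ1, sturmC_of_prod a b lam r hQ0]
  have h1 : (Finset.univ.filter (fun i : Fin (k+1) => t i ≤ lam))
      = (Finset.univ.filter (fun i : Fin (k+1) => (i : ℕ) < (j : ℕ) + 1)) := by
    apply Finset.filter_congr
    intro i _
    rw [← hj', hmono.le_iff_le, Fin.le_def]
    omega
  have h2 : (Finset.univ.filter (fun i : Fin k => r i ≤ lam))
      = (Finset.univ.filter (fun i : Fin k => (i : ℕ) < (j : ℕ))) := by
    apply Finset.filter_congr
    intro i _
    rw [← hj']
    constructor
    · intro h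
      by_contra hc
      push_neg at hc
      have : t j ≤ t i.castSucc := hmono.monotone (by
        simp only [Fin.le_def, Fin.coe_castSucc]; omega)
      linarith [(hint i).1]
    · intro h
      have : t i.succ ≤ t j := hmono.monotone (by
        simp only [Fin.le_def, Fin.val_succ]; omega)
      linarith [(hint i).2]
  rw [h1, h2, card_filter_coe_lt (k+1) ((j:ℕ)+1) (by omega),
    card_filter_coe_lt k (j:ℕ) (by omega)]

include hb in
lemma sturmC_step (k : ℕ) :
    sturmC a b lam (k+1) = sturmC a b lam k ∨ sturmC a b lam (k+1) = sturmC a b lam k + 1 := by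
  classical
  obtain ⟨t, r, hmono, hQ1, hQ0, hint⟩ := sturmQ_roots a b hb k
  rw [sturmC_of_prod a b lam t hQ1, sturmC_of_prod a b lam r hQ0]
  have hle1 : ((Finset.univ.filter (fun i : Fin k => r i ≤ lam)).card)
      ≤ ((Finset.univ.filter (fun i : Fin (k+1) => t i ≤ lam)).card) := by
    apply Finset.card_le_card_of_injOn (fun i => i.castSucc)
    · intro i hi
      simp only [Finset.coe_filter, Set.mem_setOf_eq, Finset.mem_filter, Finset.mem_coe, Finset.mem_univ, true_and] at hi ⊢
      linarith [(hint i).1]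
    · intro i _ i' _ h
      exact Fin.castSucc_injective k h
  have hle2 : ((Finset.univ.filter (fun i : Fin (k+1) => t i ≤ lam)).card)
      ≤ ((Finset.univ.filter (fun i : Fin k => r i ≤ lam)).card) + 1 := by
    have hsub : (Finset.univ.filter (fun i : Fin (k+1) => t i ≤ lam))
        ⊆ insert 0 ((Finset.univ.filter (fun i : Fin k => r i ≤ lam)).image Fin.succ) := by
      intro i hi
      simp only [Finset.mem_filter, Finset.mem_univ, true_and] at hi
      rcases eq_or_ne i 0 with h0 | h0
      · rw [h0]; exact Finset.mem_insert_self _ _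
      · obtain ⟨j, rfl⟩ := Fin.eq_succ_of_ne_zero h0
        apply Finset.mem_insert_of_mem
        apply Finset.mem_image_of_mem
        simp only [Finset.mem_filter, Finset.mem_univ, true_and]
        linarith [(hint j).2]
    calc ((Finset.univ.filter (fun i : Fin (k+1) => t i ≤ lam)).card)
        ≤ (insert 0 ((Finset.univ.filter (fun i : Fin k => r i ≤ lam)).image Fin.succ)).card :=
          Finset.card_le_card hsub
      _ ≤ ((Finset.univ.filter (fun i : Fin k => r i ≤ lam)).image Fin.succ).card + 1 :=
          Finset.card_insert_le _ _
      _ = ((Finset.univ.filter (fun i : Fin k => r i ≤ lam)).card) + 1 := by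
          rw [Finset.card_image_of_injective _ (Fin.succ_injective k)]
  omega

end counting


lemma count_steps (c : ℕ → ℕ) (h0 : c 0 = 0)
    (hstep : ∀ k, c (k+1) = c k ∨ c (k+1) = c k + 1) :
    ∀ m, ((Finset.Icc 1 m).filter (fun k => c k = c (k-1) + 1)).card = c m := by
  intro m
  induction m with
  | zero => simp [h0]
  | succ m ih =>
    have hins : Finset.Icc 1 (m+1) = insert (m+1) (Finset.Icc 1 m) := by
      ext x; simp [Finset.mem_Icc, Finset.mem_insert]; omega
    rw [hins, Finset.filter_insert]
    rcases hstep m with h | h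
    · rw [if_neg (by simp only [Nat.add_sub_cancel]; omega), ih]; omega
    · rw [if_pos (by simpa using h), Finset.card_insert_of_notMem (by simp), ih]
      omega


set_option maxHeartbeats 2000000 in
lemma tridiag_det (n : ℕ) (H : Matrix (Fin (n + 1)) (Fin (n + 1)) ℝ)
    (α : Fin (n + 1) → ℝ) (β : Fin n → ℝ)
    (hdiag : ∀ i, H i i = α i)
    (hsup : ∀ i : Fin n, H i.castSucc i.succ = β i)
    (hsub : ∀ i : Fin n, H i.succ i.castSucc = β i)
    (hzero : ∀ i j : Fin (n + 1), ((i : ℕ) + 2 ≤ (j : ℕ) ∨ (j : ℕ) + 2 ≤ (i : ℕ)) → H i j = 0)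
    (x : ℝ) :
    ∀ m : ℕ, ∀ hm : m ≤ n,
      (((H - x • (1 : Matrix (Fin (n+1)) (Fin (n+1)) ℝ)).submatrix
          (Fin.castLE (by omega)) (Fin.castLE (by omega)) : Matrix (Fin (m+1)) (Fin (m+1)) ℝ)).det
        = Polynomial.eval x (sturmQ (fun k => α ⟨min k n, by omega⟩)
            (fun k => if h : k < n then β ⟨k, h⟩ else 1) (m+1)) := by
  set M := H - x • (1 : Matrix (Fin (n+1)) (Fin (n+1)) ℝ) with hM
  set a : ℕ → ℝ := fun k => α ⟨min k n, by omega⟩ with ha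
  set b : ℕ → ℝ := fun k => if h : k < n then β ⟨k, h⟩ else 1 with hbdef
  have hMe : ∀ (i j : Fin (n+1)), M i j = H i j - (if i = j then x else 0) := by
    intro i j
    rw [hM, Matrix.sub_apply, Matrix.smul_apply, Matrix.one_apply]
    split <;> simp
  have hMdiag : ∀ (i : Fin (n+1)), M i i = α i - x := by
    intro i; rw [hMe, hdiag, if_pos rfl]
  have hMoff : ∀ (i j : Fin (n+1)), i ≠ j → M i j = H i j := by
    intro i j h; rw [hMe, if_neg h, sub_zero]
  intro m
  induction m using Nat.strong_induction_on with
  | _ m ih =>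
    match m with
    | 0 =>
      intro hm
      rw [Matrix.det_fin_one]
      show M (Fin.castLE (by omega) (0 : Fin 1)) (Fin.castLE (by omega) (0 : Fin 1))
        = Polynomial.eval x (sturmQ a b 1)
      have h0 : (Fin.castLE (show 0+1 ≤ n+1 by omega) (0 : Fin 1)) = (0 : Fin (n+1)) := rfl
      rw [h0, hMdiag]
      show α 0 - x = Polynomial.eval x (Polynomial.C (a 0) - Polynomial.X)
      have : a 0 = α 0 := by rw [ha]; exact congrArg α (Fin.ext (show 0 ⊓ n = 0 by omega))
      rw [this]; simp
    | 1 =>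
      intro hm
      rw [Matrix.det_fin_two]
      simp only [Matrix.submatrix_apply]
      have e0 : (Fin.castLE (show 1+1 ≤ n+1 by omega) (0 : Fin 2)) = (0 : Fin (n+1)) := rfl
      have e1 : (Fin.castLE (show 1+1 ≤ n+1 by omega) (1 : Fin 2)) = (⟨1, by omega⟩ : Fin (n+1)) := rfl
      have hn1 : 0 < n := by omega
      have hβ0 : H (0 : Fin (n+1)) ⟨1, by omega⟩ = β ⟨0, hn1⟩ := by
        have := hsup ⟨0, hn1⟩
        convert this using 2 <;> exact Fin.ext (by simp)
      have hβ0' : H (⟨1, by omega⟩ : Fin (n+1)) 0 = β ⟨0, hn1⟩ := by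
        have := hsub ⟨0, hn1⟩
        convert this using 2 <;> exact Fin.ext (by simp)
      rw [e0, e1, hMdiag, hMdiag,
        hMoff _ _ (by intro h; exact absurd (congrArg Fin.val h) (by simp)),
        hMoff _ _ (by intro h; exact absurd (congrArg Fin.val h) (by simp)),
        hβ0, hβ0']
      show _ = Polynomial.eval x ((Polynomial.C (a 1) - Polynomial.X) * sturmQ a b 1
        - Polynomial.C (b 0) ^ 2 * sturmQ a b 0)
      have ha1 : a 1 = α ⟨1, by omega⟩ := by rw [ha]; exact congrArg α (Fin.ext (show 1 ⊓ n = 1 by omega))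
      have ha0 : a 0 = α 0 := by rw [ha]; exact congrArg α (Fin.ext (show 0 ⊓ n = 0 by omega))
      have hb0 : b 0 = β ⟨0, hn1⟩ := by rw [hbdef]; simp [hn1]
      show _ = Polynomial.eval x ((Polynomial.C (a 1) - Polynomial.X) *
        (Polynomial.C (a 0) - Polynomial.X) - Polynomial.C (b 0) ^ 2 * 1)
      rw [ha1, ha0, hb0]
      simp
      ring
    | (k+2) =>
      intro hm
      have h1 : k + 1 + 1 ≤ n + 1 := by omega
      have h2 : k + 2 ≤ n + 1 := by omega
      have h0 : k + 1 ≤ n + 1 := by omega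
      have h3 : k + 3 ≤ n + 1 := by omega
      set A : Matrix (Fin (k+3)) (Fin (k+3)) ℝ :=
        M.submatrix (Fin.castLE h3) (Fin.castLE h3) with hA
      show A.det = _
      have hAentry : ∀ (rr cc : Fin (k+3)), A rr cc = M (Fin.castLE h3 rr) (Fin.castLE h3 cc) :=
        fun rr cc => rfl
      -- zero entries in the last row
      have hz1 : ∀ j : Fin (k+1), A (Fin.last (k+2)) (j.castSucc.castSucc) = 0 := by
        intro j
        rw [hAentry, hMoff, hzero]
        · right
          simp [Fin.coe_castLE]
          omega
        · intro hcon
          have := congrArg Fin.val hcon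
          simp [Fin.coe_castLE] at this
          omega
      -- the subdiagonal entry
      have hkn : k + 1 < n := by omega
      have hAsub : A (Fin.last (k+2)) ((Fin.last (k+1)).castSucc) = β ⟨k+1, hkn⟩ := by
        rw [hAentry, hMoff]
        · have := hsub ⟨k+1, hkn⟩
          convert this using 2 <;> exact Fin.ext (by simp)
        · intro hcon
          have := congrArg Fin.val hcon
          simp [Fin.coe_castLE] at this
      -- the diagonal entry
      have hAdiagv : A (Fin.last (k+2)) (Fin.last (k+2)) = α ⟨k+2, by omega⟩ - x := by
        rw [hAentry, show Fin.castLE h3 (Fin.last (k+2)) = (⟨k+2, by omega⟩ : Fin (n+1))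
          from Fin.ext (by simp), hMdiag]
      -- expand along the last row
      rw [Matrix.det_succ_row A (Fin.last (k+2)), Fin.sum_univ_castSucc, Fin.sum_univ_castSucc]
      have hzsum : ∑ j : Fin (k+1),
          (-1 : ℝ)^((Fin.last (k+2) : ℕ) + ((j.castSucc.castSucc : Fin (k+3)) : ℕ))
            * A (Fin.last (k+2)) (j.castSucc.castSucc)
            * (A.submatrix (Fin.last (k+2)).succAbove (j.castSucc.castSucc).succAbove).det = 0 := by
        apply Finset.sum_eq_zero
        intro j _
        rw [hz1 j]
        ring
      rw [hzsum]
      -- the principal (k+2)x(k+2) minor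
      have hcomp1 : (Fin.castLE h3) ∘ (Fin.castSucc : Fin (k+2) → Fin (k+3))
          = Fin.castLE h2 := funext fun i => Fin.ext (by simp)
      have hminor1 : (A.submatrix (Fin.last (k+2)).succAbove (Fin.last (k+2)).succAbove).det
          = Polynomial.eval x (sturmQ a b (k+2)) := by
        rw [Fin.succAbove_last, hA, Matrix.submatrix_submatrix, hcomp1]
        exact ih (k+1) (by omega) (by omega)
      -- the mixed minor
      set j0 : Fin (k+3) := (Fin.last (k+1)).castSucc with hj0
      have hj0a : ∀ i : Fin (k+1), j0.succAbove i.castSucc = i.castSucc.castSucc := by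
        intro i
        apply Fin.succAbove_of_castSucc_lt
        simp only [hj0, Fin.lt_def, Fin.coe_castSucc, Fin.val_last]
        omega
      have hj0b : j0.succAbove (Fin.last (k+1)) = Fin.last (k+2) := by
        rw [Fin.succAbove_of_le_castSucc _ _ (by simp [hj0, Fin.le_def]), Fin.succ_last]
      set M' : Matrix (Fin (k+2)) (Fin (k+2)) ℝ :=
        A.submatrix (Fin.last (k+2)).succAbove j0.succAbove with hM'
      have hM'row : (Fin.last (k+2)).succAbove = (Fin.castSucc : Fin (k+2) → Fin (k+3)) :=
        Fin.succAbove_last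
      -- zero entries in last column of M'
      have hz2 : ∀ i : Fin (k+1), M' i.castSucc (Fin.last (k+1)) = 0 := by
        intro i
        rw [hM', Matrix.submatrix_apply, hM'row, hj0b, hAentry, hMoff, hzero]
        · left
          simp only [Fin.coe_castLE, Fin.coe_castSucc, Fin.val_last]
          omega
        · intro hcon
          have := congrArg Fin.val hcon
          simp [Fin.coe_castLE] at this
          omega
      have hM'last : M' (Fin.last (k+1)) (Fin.last (k+1)) = β ⟨k+1, hkn⟩ := by
        rw [hM', Matrix.submatrix_apply, hM'row, hj0b, hAentry, hMoff]
        · have := hsup ⟨k+1, hkn⟩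
          convert this using 2 <;> exact Fin.ext (by simp)
        · intro hcon
          have := congrArg Fin.val hcon
          simp [Fin.coe_castLE] at this
      have hminor2det : M'.det = β ⟨k+1, hkn⟩ * Polynomial.eval x (sturmQ a b (k+1)) := by
        rw [Matrix.det_succ_column M' (Fin.last (k+1)), Fin.sum_univ_castSucc]
        have hzs : ∑ i : Fin (k+1),
            (-1 : ℝ)^(((i.castSucc : Fin (k+2)) : ℕ) + ((Fin.last (k+1) : ℕ)))
              * M' i.castSucc (Fin.last (k+1))
              * (M'.submatrix i.castSucc.succAbove (Fin.last (k+1)).succAbove).det = 0 := by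
          apply Finset.sum_eq_zero
          intro i _
          rw [hz2 i]
          ring
        rw [hzs, zero_add, hM'last]
        have hsign : (-1 : ℝ)^(((Fin.last (k+1) : ℕ)) + ((Fin.last (k+1) : ℕ))) = 1 := by
          rw [Fin.val_last]
          exact Even.neg_one_pow ⟨k+1, by ring⟩
        rw [hsign, one_mul]
        congr 1
        -- remaining minor is the (k+1)x(k+1) principal minor
        rw [hM', Matrix.submatrix_submatrix, hA, Matrix.submatrix_submatrix]
        have hrows : (Fin.castLE h3) ∘ ((Fin.last (k+2)).succAbove ∘ (Fin.last (k+1)).succAbove)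
            = Fin.castLE h0 := by
          funext i
          simp only [Function.comp_apply, Fin.succAbove_last]
          exact Fin.ext (by simp)
        have hcols : (Fin.castLE h3) ∘ (j0.succAbove ∘ (Fin.last (k+1)).succAbove)
            = Fin.castLE h0 := by
          funext i
          simp only [Function.comp_apply, Fin.succAbove_last]
          rw [hj0a i]
          exact Fin.ext (by simp)
        rw [hrows, hcols]
        exact ih k (by omega) (by omega)
      -- assemble
      have hsgn1 : (-1 : ℝ)^((Fin.last (k+2) : ℕ) + ((Fin.last (k+2) : ℕ))) = 1 := by
        rw [Fin.val_last]
        exact Even.neg_one_pow ⟨k+2, by ring⟩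
      have hsgn2 : (-1 : ℝ)^((Fin.last (k+2) : ℕ) + (((Fin.last (k+1)).castSucc : Fin (k+3)) : ℕ))
          = -1 := by
        simp only [Fin.val_last, Fin.coe_castSucc]
        exact Odd.neg_one_pow ⟨k+1, by ring⟩
      rw [zero_add, hsgn1, hsgn2, one_mul, hAdiagv, hAsub, hminor1]
      have hM'eq : (A.submatrix (Fin.last (k+2)).succAbove
          ((Fin.last (k+1)).castSucc : Fin (k+3)).succAbove).det
          = β ⟨k+1, hkn⟩ * Polynomial.eval x (sturmQ a b (k+1)) := hminor2det
      rw [hM'eq]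
      -- compare with the recursion
      show _ = Polynomial.eval x ((Polynomial.C (a (k+2)) - Polynomial.X) * sturmQ a b (k+2)
        - Polynomial.C (b (k+1)) ^ 2 * sturmQ a b (k+1))
      have hak2 : a (k+2) = α ⟨k+2, by omega⟩ := by
        rw [ha]; exact congrArg α (Fin.ext (show (k+2) ⊓ n = k+2 by omega))
      have hbk1 : b (k+1) = β ⟨k+1, hkn⟩ := by rw [hbdef]; simp [hkn]
      rw [Polynomial.eval_sub, Polynomial.eval_mul, Polynomial.eval_mul, Polynomial.eval_sub,
        Polynomial.eval_pow, Polynomial.eval_C, Polynomial.eval_C, Polynomial.eval_X,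
        hak2, hbk1]
      ring


/-- Sturm sequence count for an `N×N` (`N = n + 1`) real symmetric tridiagonal
matrix `H` with diagonal `α`, nonzero off-diagonal `β`, Sturm sequence `p` and
sign sequence `s` (where `p_i = 0` is assigned the sign opposite to `p_{i−1}`):
the number of sign changes in `p_0, …, p_N` equals the number of eigenvalues of
`H`, counted with multiplicity, that are `≤ λ`. -/
theorem sturm_sequence_eigenvalue_count (n : ℕ)
    (H : Matrix (Fin (n + 1)) (Fin (n + 1)) ℝ)
    (α : Fin (n + 1) → ℝ) (β : Fin n → ℝ)
    (hdiag : ∀ i, H i i = α i)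
    (hsup : ∀ i : Fin n, H i.castSucc i.succ = β i)
    (hsub : ∀ i : Fin n, H i.succ i.castSucc = β i)
    (hzero : ∀ i j : Fin (n + 1), ((i : ℕ) + 2 ≤ (j : ℕ) ∨ (j : ℕ) + 2 ≤ (i : ℕ)) → H i j = 0)
    (hβ : ∀ i, β i ≠ 0)
    (lam : ℝ) (p : ℕ → ℝ)
    (hp0 : p 0 = 1)
    (hp1 : p 1 = α 0 - lam)
    (hpk : ∀ k : ℕ, ∀ hk2 : 2 ≤ k, ∀ hkN : k ≤ n + 1,
        p k = (α ⟨k - 1, by omega⟩ - lam) * p (k - 1) -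
          (β ⟨k - 2, by omega⟩) ^ 2 * p (k - 2))
    (s : ℕ → ℝ) (hs0 : s 0 = 1)
    (hsk : ∀ k : ℕ, ∀ hk1 : 1 ≤ k, ∀ hkN : k ≤ n + 1,
        (p k ≠ 0 → s k = Real.sign (p k)) ∧ (p k = 0 → s k = -s (k - 1))) :
    p (n + 1) = (H - lam • (1 : Matrix (Fin (n + 1)) (Fin (n + 1)) ℝ)).det ∧
      ((Finset.Icc 1 (n + 1)).filter (fun k => s k ≠ s (k - 1))).card =
        ((H.charpoly.roots).filter (fun x => x ≤ lam)).card := by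
  classical
  set a : ℕ → ℝ := fun k => α ⟨min k n, by omega⟩ with ha
  set b : ℕ → ℝ := fun k => if h : k < n then β ⟨k, h⟩ else 1 with hbdef
  have hb : ∀ k, b k ≠ 0 := by
    intro k
    rw [hbdef]
    by_cases h : k < n
    · simpa [h] using hβ ⟨k, h⟩
    · simp [h]
  -- p agrees with the evaluated Sturm polynomials
  have hpeval : ∀ k : ℕ, k ≤ n + 1 → p k = Polynomial.eval lam (sturmQ a b k) := by
    intro k
    induction k using Nat.strong_induction_on with
    | _ k ih =>
      match k with
      | 0 => intro _; rw [hp0]; simp [sturmQ]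
      | 1 =>
        intro _
        rw [hp1]
        show _ = Polynomial.eval lam (Polynomial.C (a 0) - Polynomial.X)
        rw [show a 0 = α 0 from congrArg α (Fin.ext (show 0 ⊓ n = 0 by omega))]
        simp
      | (k+2) =>
        intro hk
        rw [hpk (k+2) (by omega) hk]
        show _ = Polynomial.eval lam ((Polynomial.C (a (k+1)) - Polynomial.X) * sturmQ a b (k+1)
          - Polynomial.C (b k) ^ 2 * sturmQ a b k)
        rw [Polynomial.eval_sub, Polynomial.eval_mul, Polynomial.eval_mul, Polynomial.eval_sub,
          Polynomial.eval_pow, Polynomial.eval_C, Polynomial.eval_C, Polynomial.eval_X]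
        rw [← ih (k+1) (by omega) (by omega), ← ih k (by omega) (by omega)]
        have hae : a (k+1) = α ⟨k+2-1, by omega⟩ :=
          congrArg α (Fin.ext (show (k+1) ⊓ n = k+2-1 by omega))
        have hbe : b k = β ⟨k+2-2, by omega⟩ := by
          have hkn : k < n := by omega
          exact (dif_pos hkn).trans (congrArg β (Fin.ext (show k = k+2-2 by omega)))
        rw [hae, hbe]
        norm_num
  -- determinant identity
  have hdet : ∀ x : ℝ, (H - x • (1 : Matrix (Fin (n+1)) (Fin (n+1)) ℝ)).det
      = Polynomial.eval x (sturmQ a b (n+1)) := by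
    intro x
    have := tridiag_det n H α β hdiag hsup hsub hzero x n le_rfl
    have hid : (Fin.castLE (show n + 1 ≤ n + 1 by omega) : Fin (n+1) → Fin (n+1)) = id :=
      funext fun i => Fin.ext rfl
    rw [hid, Matrix.submatrix_id_id] at this
    exact this
  -- part 1
  have hpart1 : p (n + 1) = (H - lam • (1 : Matrix (Fin (n + 1)) (Fin (n + 1)) ℝ)).det := by
    rw [hpeval (n+1) le_rfl, hdet lam]
  refine ⟨hpart1, ?_⟩
  -- charpoly roots
  have hcharev : ∀ x : ℝ, Polynomial.eval x H.charpoly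
      = (-1 : ℝ)^(n+1) * Polynomial.eval x (sturmQ a b (n+1)) := by
    intro x
    have h1 : Polynomial.eval x H.charpoly
        = ((x • (1 : Matrix (Fin (n+1)) (Fin (n+1)) ℝ)) - H).det := by
      rw [Matrix.charpoly, ← Polynomial.coe_evalRingHom, RingHom.map_det]
      congr 1
      ext i j
      by_cases hij : i = j
      · subst hij
        simp [Matrix.charmatrix_apply_eq, Matrix.one_apply]
      · simp [Matrix.charmatrix_apply_ne _ _ _ hij, Matrix.one_apply, hij]
    rw [h1, show (x • (1 : Matrix (Fin (n+1)) (Fin (n+1)) ℝ)) - H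
      = -(H - x • (1 : Matrix (Fin (n+1)) (Fin (n+1)) ℝ)) from (neg_sub _ _).symm,
      Matrix.det_neg, hdet x]
    simp [Fintype.card_fin]
  have hcharpoly : H.charpoly = Polynomial.C ((-1 : ℝ)^(n+1)) * sturmQ a b (n+1) := by
    apply Polynomial.funext
    intro x
    rw [hcharev x]
    simp
  have hrootseq : H.charpoly.roots = (sturmQ a b (n+1)).roots := by
    rw [hcharpoly, Polynomial.roots_C_mul _ (pow_ne_zero _ (show (-1:ℝ) ≠ 0 by norm_num))]
  have hfinal : Multiset.card ((H.charpoly.roots).filter (fun x => x ≤ lam))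
      = sturmC a b lam (n+1) := by
    rw [hrootseq]; rfl
  rw [hfinal]
  -- sign invariant
  have hsgn : ∀ k : ℕ, k ≤ n + 1 → s k = (-1 : ℝ)^(sturmC a b lam k) := by
    intro k
    induction k with
    | zero => intro _; rw [hs0, sturmC_zero, pow_zero]
    | succ m ihm =>
      intro hm
      have hm' : m ≤ n + 1 := by omega
      by_cases hz : p (m+1) = 0
      · rw [(hsk (m+1) (by omega) hm).2 hz]
        simp only [Nat.add_sub_cancel]
        rw [ihm hm',
          sturmC_succ_of_root a b hb lam m (by rw [← hpeval (m+1) hm]; exact hz), pow_succ]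
        ring
      · rw [(hsk (m+1) (by omega) hm).1 hz, hpeval (m+1) hm]
        exact sturmC_sign a b hb lam (m+1) (by rw [← hpeval (m+1) hm]; exact hz)
  -- convert the filter
  have hfilter : (Finset.Icc 1 (n + 1)).filter (fun k => s k ≠ s (k - 1))
      = (Finset.Icc 1 (n + 1)).filter (fun k => sturmC a b lam k = sturmC a b lam (k-1) + 1) := by
    apply Finset.filter_congr
    intro k hk
    simp only [Finset.mem_Icc] at hk
    obtain ⟨hk1, hk2⟩ := hk
    obtain ⟨j, rfl⟩ : ∃ j, k = j + 1 := ⟨k - 1, by omega⟩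
    simp only [Nat.add_sub_cancel]
    rw [hsgn (j+1) hk2, hsgn j (by omega)]
    rcases sturmC_step a b hb lam j with he | he
    · rw [he]
      constructor
      · intro hcon; exact absurd rfl hcon
      · intro hcon; omega
    · rw [he, pow_succ]
      constructor
      · intro _; rfl
      · intro _ hcon
        have hne : ((-1:ℝ))^(sturmC a b lam j) ≠ 0 := pow_ne_zero _ (by norm_num)
        apply hne
        linarith
  rw [hfilter]
  exact count_steps (sturmC a b lam) (sturmC_zero a b lam) (fun k => sturmC_step a b hb lam k) (n+1)
end
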